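/- arXiv:1706.06571 — 5 statements merged into one kernel-verified Lean document; each statement's English description precedes it below -/
import Mathlib

section
/- Let a_1,...,a_t be real numbers. Then at most binomial(t, floor(t/2)) of the 2^t subset sums {sum_{i in I} a_i : I ⊆ {1,...,t}} lie in any open interval of length min_i |a_i|. -/
open Finset

/-- Erdős' solution to the Littlewood–Offord problem: at most `C(t, ⌊t/2⌋)` of the `2^t`
subset sums of `a₁, …, a_t` lie in any open interval of length `minᵢ |aᵢ|`. -/
theorem littlewood_offord (t : ℕ) (ht : 0 < t) (a : Fin t → ℝ) (x : ℝ) :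
    ((Finset.univ : Finset (Finset (Fin t))).filter fun I =>
        (∑ i ∈ I, a i) ∈
          Set.Ioo x (x + Finset.univ.inf' ⟨⟨0, ht⟩, Finset.mem_univ _⟩ fun i => |a i|)).card
      ≤ t.choose (t / 2) := by
  set m : ℝ := Finset.univ.inf' ⟨⟨0, ht⟩, Finset.mem_univ _⟩ fun i => |a i| with hm
  rcases le_or_gt m 0 with hm0 | hm0
  · have : ((Finset.univ : Finset (Finset (Fin t))).filter fun I =>
        (∑ i ∈ I, a i) ∈ Set.Ioo x (x + m)) = ∅ := by
      apply Finset.filter_false_of_mem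
      intro I _ hmem
      have := hmem.1.trans hmem.2
      linarith
    rw [this]
    simp [Nat.choose_pos (Nat.div_le_self t 2)]
  · set N : Finset (Fin t) := Finset.univ.filter fun i => a i < 0 with hN
    set c : ℝ := ∑ i ∈ N, a i with hc
    have hb : ∀ i, m ≤ |a i| := fun i => Finset.inf'_le _ (Finset.mem_univ i)
    have key : ∀ I : Finset (Fin t), ∑ i ∈ symmDiff I N, |a i| = (∑ i ∈ I, a i) - c := by
      intro I
      have hdisj : Disjoint (I \ N) (N \ I) := disjoint_sdiff_sdiff
      rw [symmDiff_def, Finset.sup_eq_union, Finset.sum_union hdisj]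
      have h1 : ∑ i ∈ I \ N, |a i| = ∑ i ∈ I \ N, a i := by
        apply Finset.sum_congr rfl
        intro i hi
        have : ¬ a i < 0 := by
          have := (Finset.mem_sdiff.mp hi).2
          simp [hN] at this; linarith
        rw [abs_of_nonneg (by linarith)]
      have h2 : ∑ i ∈ N \ I, |a i| = -∑ i ∈ N \ I, a i := by
        rw [← Finset.sum_neg_distrib]
        apply Finset.sum_congr rfl
        intro i hi
        have : a i < 0 := by
          have := (Finset.mem_sdiff.mp hi).1
          simpa [hN] using this
        rw [abs_of_neg this]
      rw [h1, h2]
      have e1 : ∑ i ∈ I, a i = ∑ i ∈ I \ N, a i + ∑ i ∈ I ∩ N, a i := by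
        rw [← Finset.sum_union (Finset.sdiff_disjoint.mono_right Finset.inter_subset_right),
          Finset.sdiff_union_inter]
      have e2 : c = ∑ i ∈ N \ I, a i + ∑ i ∈ I ∩ N, a i := by
        rw [Finset.inter_comm, ← Finset.sum_union
          (Finset.sdiff_disjoint.mono_right Finset.inter_subset_right),
          Finset.sdiff_union_inter]
      linarith
    set S := (Finset.univ : Finset (Finset (Fin t))).filter fun I =>
        (∑ i ∈ I, a i) ∈ Set.Ioo x (x + m) with hS
    set T := S.image fun I => symmDiff I N with hT
    have hcard : T.card = S.card := by
      exact Finset.card_image_of_injective _ (symmDiff_left_injective N)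
    have hTmem : ∀ J ∈ T, ∑ i ∈ J, |a i| ∈ Set.Ioo (x - c) (x - c + m) := by
      intro J hJ
      rw [hT, Finset.mem_image] at hJ
      obtain ⟨I, hI, rfl⟩ := hJ
      rw [hS, Finset.mem_filter] at hI
      obtain ⟨-, h1, h2⟩ := hI
      rw [key]
      exact ⟨by linarith, by linarith⟩
    have hanti : IsAntichain (· ⊆ ·) (T : Set (Finset (Fin t))) := by
      intro I hI J hJ hne hsub
      have hI' := hTmem I hI
      have hJ' := hTmem J hJ
      obtain ⟨k, hk⟩ : (J \ I).Nonempty := by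
        rw [Finset.sdiff_nonempty]
        exact fun h => hne (Finset.Subset.antisymm hsub h)
      have hsum : ∑ i ∈ J, |a i| = ∑ i ∈ I, |a i| + ∑ i ∈ J \ I, |a i| := by
        rw [add_comm, Finset.sum_sdiff hsub]
      have hge : m ≤ ∑ i ∈ J \ I, |a i| := by
        calc m ≤ |a k| := hb k
        _ ≤ ∑ i ∈ J \ I, |a i| := Finset.single_le_sum (f := fun i => |a i|) (fun i _ => abs_nonneg _) hk
      have := hI'.1
      have := hJ'.2
      linarith
    calc S.card = T.card := hcard.symm
    _ ≤ (Fintype.card (Fin t)).choose (Fintype.card (Fin t) / 2) := IsAntichain.sperner hanti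
    _ = t.choose (t / 2) := by simp
end

section
/- Let I and J be disjoint finite sets with |I| = 2m and |J| = 2n. Choose a perfect matching of I ∪ J uniformly at random, and let Z be the number of matching edges joining an element of I to an element of J. Then the probability that Z < min(m,n)/2 is at most 20/min(m,n). -/
open Finset

/-- A perfect matching of `Fin N`, encoded as a fixed-point-free involution. -/
def PerfectMatching (N : ℕ) : Type :=
  {f : Equiv.Perm (Fin N) // ∀ x, f x ≠ x ∧ f (f x) = x}

instance (N : ℕ) : Fintype (PerfectMatching N) := Subtype.fintype _

/-- The number of mixed edges of a perfect matching of `Fin (2m + 2n)`, i.e. edges joining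
`I = {0,…,2m−1}` and `J = {2m,…,2m+2n−1}`; each such edge has exactly one endpoint in `I`. -/
def mixedCount (m n : ℕ) (f : PerfectMatching (2 * m + 2 * n)) : ℕ :=
  (Finset.univ.filter fun x : Fin (2 * m + 2 * n) =>
    x.val < 2 * m ∧ ¬ ((f.val x).val < 2 * m)).card

namespace PMaux

variable (m n : ℕ)

local notation "N" => 2 * m + 2 * n
local notation "PM" => PerfectMatching (2 * m + 2 * n)

def IJ (f : PM) : Finset (Fin N) :=
  Finset.univ.filter fun x => x.val < 2 * m ∧ ¬ ((f.val x).val < 2 * m)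

def JI (f : PM) : Finset (Fin N) :=
  Finset.univ.filter fun x => ¬ x.val < 2 * m ∧ (f.val x).val < 2 * m

def II (f : PM) : Finset (Fin N) :=
  Finset.univ.filter fun x => x.val < 2 * m ∧ (f.val x).val < 2 * m

def JJ (f : PM) : Finset (Fin N) :=
  Finset.univ.filter fun x => ¬ x.val < 2 * m ∧ ¬ (f.val x).val < 2 * m

lemma IJ_card (f : PM) : (IJ m n f).card = mixedCount m n f := rfl

lemma card_I (hn : 1 ≤ n) :
    ((Finset.univ : Finset (Fin N)).filter fun x => x.val < 2 * m).card = 2 * m := by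
  have hb : 2 * m < N := by omega
  have : ((Finset.univ : Finset (Fin N)).filter fun x => x.val < 2 * m) =
      Finset.Iio (⟨2 * m, hb⟩ : Fin N) := by
    ext x; simp [Fin.lt_def]
  rw [this, Fin.card_Iio]

lemma JI_card (f : PM) : (JI m n f).card = mixedCount m n f := by
  rw [← IJ_card]
  apply Finset.card_nbij' (i := fun x => f.val x) (j := fun x => f.val x)
  · intro a ha
    simp only [JI, IJ, Finset.mem_coe, mem_filter, mem_univ, true_and] at *
    exact ⟨ha.2, by rw [(f.2 a).2]; exact ha.1⟩
  · intro a ha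
    simp only [JI, IJ, Finset.mem_coe, mem_filter, mem_univ, true_and] at *
    exact ⟨ha.2, by rw [(f.2 a).2]; exact ha.1⟩
  · intro a _; exact (f.2 a).2
  · intro a _; exact (f.2 a).2

lemma II_card (hn : 1 ≤ n) (f : PM) : (II m n f).card + mixedCount m n f = 2 * m := by
  rw [← IJ_card]
  have h := Finset.card_filter_add_card_filter_not
    (s := (Finset.univ : Finset (Fin N)).filter fun x => x.val < 2 * m)
    (p := fun x => (f.val x).val < 2 * m)
  rw [Finset.filter_filter, Finset.filter_filter, card_I m n hn] at h
  simpa [II, IJ] using h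

lemma JJ_card (hn : 1 ≤ n) (f : PM) : (JJ m n f).card + mixedCount m n f = 2 * n := by
  rw [← JI_card]
  have h := Finset.card_filter_add_card_filter_not
    (s := (Finset.univ : Finset (Fin N)).filter fun x => ¬ x.val < 2 * m)
    (p := fun x => ¬ (f.val x).val < 2 * m)
  rw [Finset.filter_filter, Finset.filter_filter] at h
  have hJ : ((Finset.univ : Finset (Fin N)).filter fun x => ¬ x.val < 2 * m).card = 2 * n := by
    have := Finset.card_filter_add_card_filter_not
      (s := (Finset.univ : Finset (Fin N))) (p := fun x : Fin N => x.val < 2 * m)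
    rw [card_I m n hn] at this
    simp only [Finset.card_univ, Fintype.card_fin] at this
    omega
  simp only [not_not] at h
  rw [hJ] at h
  simpa [JJ, JI] using h


def conj (f : PM) (u v : Fin N) : PM :=
  ⟨Equiv.swap u v * f.1 * Equiv.swap u v, by
    intro x
    constructor
    · intro h
      have h2 : f.1 (Equiv.swap u v x) = Equiv.swap u v x := by
        have := congrArg (Equiv.swap u v) h
        simpa [Equiv.Perm.mul_apply, Equiv.swap_apply_self] using this
      exact (f.2 _).1 h2
    · simp [Equiv.Perm.mul_apply, Equiv.swap_apply_self, (f.2 _).2]⟩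

variable {m n}

lemma conj_IJ (f : PM) (u v : Fin N) (hu : u.val < 2 * m) (hfu : (f.val u).val < 2 * m)
    (hv : ¬ v.val < 2 * m) (hfv : ¬ (f.val v).val < 2 * m) : IJ m n (conj m n f u v) = insert u (insert (f.val u) (IJ m n f)) := by
  have hne_u : f.val u ≠ u := (f.2 u).1
  have hne_v : f.val v ≠ v := (f.2 v).1
  have huv : u ≠ v := fun h => by subst h; exact hv hu
  have hfuv : f.val u ≠ v := fun h => hv (h ▸ hfu)
  have hfvu : f.val v ≠ u := fun h => hfv (by rw [h]; exact hu)
  have hinj := f.1.injective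
  have key : ∀ x, (conj m n f u v).val x =
      if x = u then f.val v else if x = v then f.val u
      else if x = f.val u then v else if x = f.val v then u else f.val x := by
    intro x
    show Equiv.swap u v (f.val (Equiv.swap u v x)) = _
    split_ifs with h1 h2 h3 h4
    · subst h1; rw [Equiv.swap_apply_left, Equiv.swap_apply_of_ne_of_ne hfvu hne_v]
    · subst h2; rw [Equiv.swap_apply_right, Equiv.swap_apply_of_ne_of_ne hne_u hfuv]
    · subst h3; rw [Equiv.swap_apply_of_ne_of_ne hne_u hfuv, (f.2 u).2, Equiv.swap_apply_left]
    · subst h4; rw [Equiv.swap_apply_of_ne_of_ne hfvu hne_v, (f.2 v).2, Equiv.swap_apply_right]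
    · rw [Equiv.swap_apply_of_ne_of_ne h1 h2, Equiv.swap_apply_of_ne_of_ne]
      · intro h
        exact h3 (by rw [← congrArg f.val h, (f.2 x).2])
      · intro h
        exact h4 (by rw [← congrArg f.val h, (f.2 x).2])
  ext x
  simp only [IJ, mem_insert, mem_filter, mem_univ, true_and, key]
  split_ifs with h1 h2 h3 h4
  · subst h1; exact ⟨fun _ => Or.inl rfl, fun _ => ⟨hu, hfv⟩⟩
  · subst h2
    constructor
    · rintro ⟨h, -⟩; exact absurd h hv
    · rintro (h | h | ⟨h, -⟩)
      · exact absurd h.symm huv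
      · exact absurd h.symm hfuv
      · exact absurd h hv
  · subst h3; exact ⟨fun _ => Or.inr (Or.inl rfl), fun _ => ⟨hfu, hv⟩⟩
  · subst h4
    constructor
    · rintro ⟨h, -⟩; exact absurd h hfv
    · rintro (h | h | ⟨h, -⟩)
      · exact absurd h hfvu
      · exact absurd (hinj h).symm huv
      · exact absurd h hfv
  · simp [h1, h3]

lemma conj_mixedCount (f : PM) (u v : Fin N) (hu : u.val < 2 * m)
    (hfu : (f.val u).val < 2 * m) (hv : ¬ v.val < 2 * m) (hfv : ¬ (f.val v).val < 2 * m) :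
    mixedCount m n (conj m n f u v) = mixedCount m n f + 2 := by
  have hfu_notmem : f.val u ∉ IJ m n f := by
    simp only [IJ, mem_filter, mem_univ, true_and, not_and, not_not]
    intro _; rw [(f.2 u).2]; exact hu
  have hu_notmem : u ∉ insert (f.val u) (IJ m n f) := by
    simp only [mem_insert, IJ, mem_filter, mem_univ, true_and]
    push_neg
    exact ⟨Ne.symm (f.2 u).1, fun _ => hfu⟩
  rw [← IJ_card, conj_IJ f u v hu hfu hv hfv, card_insert_of_notMem hu_notmem,
    card_insert_of_notMem hfu_notmem, IJ_card]

lemma conj_apply_u (f : PM) (u v : Fin N) (hu : u.val < 2 * m)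
    (hfu : (f.val u).val < 2 * m) (hv : ¬ v.val < 2 * m) (hfv : ¬ (f.val v).val < 2 * m) :
    (conj m n f u v).val u = f.val v := by
  have hne_v : f.val v ≠ v := (f.2 v).1
  have hfvu : f.val v ≠ u := fun h => hfv (by rw [h]; exact hu)
  show Equiv.swap u v (f.val (Equiv.swap u v u)) = _
  rw [Equiv.swap_apply_left, Equiv.swap_apply_of_ne_of_ne hfvu hne_v]

lemma conj_apply_v (f : PM) (u v : Fin N) (hu : u.val < 2 * m)
    (hfu : (f.val u).val < 2 * m) (hv : ¬ v.val < 2 * m) (hfv : ¬ (f.val v).val < 2 * m) :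
    (conj m n f u v).val v = f.val u := by
  have hne_u : f.val u ≠ u := (f.2 u).1
  have hfuv : f.val u ≠ v := fun h => hv (h ▸ hfu)
  show Equiv.swap u v (f.val (Equiv.swap u v v)) = _
  rw [Equiv.swap_apply_right, Equiv.swap_apply_of_ne_of_ne hne_u hfuv]

lemma conj_conj (f : PM) (u v : Fin N) : conj m n (conj m n f u v) u v = f := by
  apply Subtype.ext
  ext x
  simp [conj, Equiv.Perm.mul_apply, Equiv.swap_apply_self]


def Sz (z : ℕ) : Finset PM := Finset.univ.filter fun f => mixedCount m n f = z

def Nz (m n z : ℕ) : ℕ := (Sz (m:=m) (n:=n) z).card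

lemma L1 (hm : 1 ≤ m) (hn : 1 ≤ n) (z : ℕ) :
    Nz m n z * ((2 * m - z) * (2 * n - z)) ≤ Nz m n (z + 2) * ((z + 2) * (z + 2)) := by
  classical
  have hD : ((Sz (m:=m) (n:=n) z).sigma fun f => II m n f ×ˢ JJ m n f).card
      = Nz m n z * ((2 * m - z) * (2 * n - z)) := by
    rw [Finset.card_sigma]
    rw [Finset.sum_congr rfl (fun f hf => ?_), Finset.sum_const, smul_eq_mul]
    · rfl
    · simp only [Sz, mem_filter, mem_univ, true_and] at hf
      rw [Finset.card_product]
      have h1 := II_card m n hn f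
      have h2 := JJ_card m n hn f
      rw [hf] at h1 h2
      have e1 : (II m n f).card = 2 * m - z := by omega
      have e2 : (JJ m n f).card = 2 * n - z := by omega
      rw [e1, e2]
  have hE : ((Sz (m:=m) (n:=n) (z+2)).sigma fun g => IJ m n g ×ˢ JI m n g).card
      = Nz m n (z + 2) * ((z + 2) * (z + 2)) := by
    rw [Finset.card_sigma]
    rw [Finset.sum_congr rfl (fun g hg => ?_), Finset.sum_const, smul_eq_mul]
    · rfl
    · simp only [Sz, mem_filter, mem_univ, true_and] at hg
      rw [Finset.card_product, IJ_card, JI_card, hg]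
  rw [← hD, ← hE]
  apply Finset.card_le_card_of_injOn (fun p => ⟨conj m n p.1 p.2.1 p.2.2, p.2⟩)
  · rintro ⟨f, u, v⟩ hp
    simp only [Finset.mem_coe, Finset.mem_sigma, Finset.mem_product, Sz, mem_filter, mem_univ, true_and,
      II, JJ, IJ, JI] at hp ⊢
    obtain ⟨hf, ⟨hu, hfu⟩, hv, hfv⟩ := hp
    refine ⟨?_, ⟨hu, ?_⟩, hv, ?_⟩
    · rw [conj_mixedCount f u v hu hfu hv hfv, hf]
    · rw [conj_apply_u f u v hu hfu hv hfv]; exact hfv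
    · rw [conj_apply_v f u v hu hfu hv hfv]; exact hfu
  · rintro ⟨f, u, v⟩ hp ⟨f', u', v'⟩ hq h
    obtain ⟨h1, h2⟩ := Sigma.mk.inj_iff.mp h
    have h2' : (u, v) = (u', v') := eq_of_heq h2
    rw [Prod.mk.injEq] at h2'
    obtain ⟨rfl, rfl⟩ := h2'
    have : conj m n (conj m n f u v) u v = conj m n (conj m n f' u v) u v := by rw [h1]
    rw [conj_conj, conj_conj] at this
    simp [this]

lemma Nz_le_T (z : ℕ) : Nz m n z ≤ Fintype.card PM := by
  rw [← Finset.card_univ]; exact Finset.card_filter_le _ _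

lemma chain (hm : 1 ≤ m) (hn : 1 ≤ n) (z j : ℕ)
    (h : ∀ i < j, 2 * ((z + 2 * i + 2) * (z + 2 * i + 2)) ≤
      (2 * m - (z + 2 * i)) * (2 * n - (z + 2 * i))) :
    Nz m n z * 2 ^ j ≤ Nz m n (z + 2 * j) := by
  induction j with
  | zero => simp
  | succ j ih =>
    have ih' := ih (fun i hi => h i (by omega))
    have hL1 := L1 hm hn (z + 2 * j)
    have hq := h j (by omega)
    have key : Nz m n (z + 2 * j) * (2 * ((z + 2 * j + 2) * (z + 2 * j + 2))) ≤
        Nz m n (z + 2 * j + 2) * ((z + 2 * j + 2) * (z + 2 * j + 2)) := by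
      calc Nz m n (z + 2 * j) * (2 * ((z + 2 * j + 2) * (z + 2 * j + 2)))
          ≤ Nz m n (z + 2 * j) * ((2 * m - (z + 2 * j)) * (2 * n - (z + 2 * j))) :=
            Nat.mul_le_mul_left _ hq
        _ ≤ Nz m n (z + 2 * j + 2) * ((z + 2 * j + 2) * (z + 2 * j + 2)) := hL1
    have hpos : 0 < (z + 2 * j + 2) * (z + 2 * j + 2) := by positivity
    have key2 : Nz m n (z + 2 * j) * 2 ≤ Nz m n (z + 2 * j + 2) := by
      have := key
      rw [show Nz m n (z + 2 * j) * (2 * ((z + 2 * j + 2) * (z + 2 * j + 2)))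
        = (Nz m n (z + 2 * j) * 2) * ((z + 2 * j + 2) * (z + 2 * j + 2)) by ring] at this
      exact Nat.le_of_mul_le_mul_right this hpos
    calc Nz m n z * 2 ^ (j + 1) = Nz m n z * 2 ^ j * 2 := by ring
      _ ≤ Nz m n (z + 2 * j) * 2 := Nat.mul_le_mul_right _ ih'
      _ ≤ Nz m n (z + 2 * j + 2) := key2
      _ = Nz m n (z + 2 * (j + 1)) := by ring_nf

lemma quad (hM : 21 ≤ min m n) (z' : ℕ) (hz : 4 * z' ≤ 3 * min m n) :
    2 * ((z' + 2) * (z' + 2)) ≤ (2 * m - z') * (2 * n - z') := by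
  have hm' : min m n ≤ m := Nat.min_le_left m n
  have hn' : min m n ≤ n := Nat.min_le_right m n
  obtain ⟨a, ha⟩ : ∃ a, 2 * m = z' + a := ⟨2 * m - z', by omega⟩
  obtain ⟨b, hb⟩ : ∃ b, 2 * n = z' + b := ⟨2 * n - z', by omega⟩
  have ea : 2 * m - z' = a := by omega
  have eb : 2 * n - z' = b := by omega
  rw [ea, eb]
  have h5a : 5 * min m n ≤ 4 * a := by omega
  have h5b : 5 * min m n ≤ 4 * b := by omega
  have hab : (5 * min m n) * (5 * min m n) ≤ (4 * a) * (4 * b) :=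
    Nat.mul_le_mul h5a h5b
  have hz8 : 4 * (z' + 2) ≤ 3 * min m n + 8 := by omega
  have hz2 : (4 * (z' + 2)) * (4 * (z' + 2)) ≤ (3 * min m n + 8) * (3 * min m n + 8) :=
    Nat.mul_le_mul hz8 hz8
  have hM2 : 2 * ((3 * min m n + 8) * (3 * min m n + 8)) ≤ (5 * min m n) * (5 * min m n) := by
    nlinarith [hM]
  nlinarith [hab, hz2, hM2]

lemma T_pos (hm : 1 ≤ m) (hn : 1 ≤ n) : 0 < Fintype.card PM := by
  rw [Fintype.card_pos_iff]
  refine ⟨⟨Fin.revPerm, fun x => ⟨?_, Fin.rev_rev x⟩⟩⟩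
  intro h
  have hv := congrArg Fin.val h
  rw [Fin.revPerm_apply] at hv
  have := Fin.val_rev x
  have hlt := x.isLt
  omega

lemma geom_even (a : ℕ) :
    ∑ d ∈ Finset.range (2 * a), ((2 : ℝ))⁻¹ ^ (d / 2) = 4 - 4 * (2⁻¹ : ℝ) ^ a := by
  induction a with
  | zero => norm_num
  | succ a ih =>
    rw [show 2 * (a + 1) = 2 * a + 1 + 1 by ring, Finset.sum_range_succ, Finset.sum_range_succ,
      ih, show (2 * a + 1) / 2 = a by omega, show (2 * a) / 2 = a by omega, pow_succ]
    ring

lemma geom (K : ℕ) : ∑ d ∈ Finset.range K, ((2 : ℝ))⁻¹ ^ (d / 2) ≤ 4 := by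
  have h1 : ∑ d ∈ Finset.range K, ((2 : ℝ))⁻¹ ^ (d / 2)
      ≤ ∑ d ∈ Finset.range (2 * K), ((2 : ℝ))⁻¹ ^ (d / 2) := by
    apply Finset.sum_le_sum_of_subset_of_nonneg
    · exact Finset.range_subset_range.mpr (by omega)
    · intros; positivity
  rw [geom_even] at h1
  have : (0:ℝ) ≤ 4 * (2⁻¹ : ℝ) ^ K := by positivity
  linarith

lemma lemF (q : ℕ) (hq : 2 ≤ q) : 8 * q + 6 ≤ 10 * 2 ^ q := by
  induction q with
  | zero => omega
  | succ q ih =>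
    rcases Nat.lt_or_ge q 2 with h | h
    · interval_cases q <;> norm_num
    · have := ih h
      have h4 : 4 ≤ 2 ^ q := by
        calc 4 = 2 ^ 2 := rfl
        _ ≤ 2 ^ q := Nat.pow_le_pow_right (by norm_num) h
      rw [pow_succ]
      omega

end PMaux

/-- For a uniformly random perfect matching of `I ∪ J` with `|I| = 2m`, `|J| = 2n`, the
probability that fewer than `min(m,n)/2` edges are mixed is at most `20/min(m,n)`. -/
theorem few_mixed_edges_prob (m n : ℕ) (hm : 1 ≤ m) (hn : 1 ≤ n) :
    ((Finset.univ.filter fun f : PerfectMatching (2 * m + 2 * n) =>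
        (mixedCount m n f : ℝ) < (min m n : ℝ) / 2).card : ℝ) /
        Fintype.card (PerfectMatching (2 * m + 2 * n)) ≤
      20 / (min m n : ℝ) := by
  classical
  have hM1 : 1 ≤ min m n := le_min hm hn
  have hT : 0 < Fintype.card (PerfectMatching (2 * m + 2 * n)) := PMaux.T_pos hm hn
  have hTR : (0 : ℝ) < (Fintype.card (PerfectMatching (2 * m + 2 * n)) : ℝ) := by
    exact_mod_cast hT
  have hMcast : (min (m : ℝ) (n : ℝ)) = ((min m n : ℕ) : ℝ) := by
    exact_mod_cast (Nat.cast_min (m := m) (n := n)).symm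
  have hMR : (0 : ℝ) < ((min m n : ℕ) : ℝ) := by exact_mod_cast hM1
  rw [hMcast]
  set M := min m n with hMdef
  set T := Fintype.card (PerfectMatching (2 * m + 2 * n)) with hTdef
  have hcle : ((Finset.univ.filter fun f : PerfectMatching (2 * m + 2 * n) =>
      (mixedCount m n f : ℝ) < ((M : ℕ) : ℝ) / 2).card : ℝ) ≤ (T : ℝ) := by
    have := Finset.card_filter_le (Finset.univ : Finset (PerfectMatching (2 * m + 2 * n)))
      (fun f => (mixedCount m n f : ℝ) < ((M : ℕ) : ℝ) / 2)
    rw [Finset.card_univ] at this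
    exact_mod_cast this
  rcases Nat.lt_or_ge M 21 with hM20 | hM21
  · rw [div_le_div_iff₀ hTR hMR]
    have h20 : ((M : ℕ) : ℝ) ≤ 20 := by exact_mod_cast (by omega : M ≤ 20)
    have h0 : (0:ℝ) ≤ ((Finset.univ.filter fun f : PerfectMatching (2 * m + 2 * n) =>
      (mixedCount m n f : ℝ) < ((M : ℕ) : ℝ) / 2).card : ℝ) := Nat.cast_nonneg _
    nlinarith [hcle, h0]
  · -- main case
    set K := (M + 1) / 2 with hKdef
    set q := (M + 2) / 8 with hqdef
    -- rewrite the filter condition to a ℕ condition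
    have hfilter : (Finset.univ.filter fun f : PerfectMatching (2 * m + 2 * n) =>
        (mixedCount m n f : ℝ) < ((M : ℕ) : ℝ) / 2)
        = Finset.univ.filter (fun f => 2 * mixedCount m n f < M) := by
      apply Finset.filter_congr
      intro f _
      rw [lt_div_iff₀ (by norm_num : (0:ℝ) < 2)]
      constructor
      · intro h
        have : ((mixedCount m n f * 2 : ℕ) : ℝ) < ((M : ℕ) : ℝ) := by push_cast; linarith
        have := Nat.cast_lt.mp this
        omega
      · intro h
        have : ((mixedCount m n f * 2 : ℕ) : ℝ) < ((M : ℕ) : ℝ) := by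
          exact_mod_cast (by omega : mixedCount m n f * 2 < M)
        push_cast at this
        linarith
    have hcard : ((Finset.univ.filter fun f : PerfectMatching (2 * m + 2 * n) =>
        2 * mixedCount m n f < M).card : ℕ) ≤ ∑ z ∈ Finset.range K, PMaux.Nz m n z := by
      rw [Finset.card_eq_sum_card_fiberwise (f := fun f => mixedCount m n f)
        (t := Finset.range K) (fun f hf => by
          simp only [Finset.mem_coe, Finset.mem_filter] at hf
          rw [Finset.mem_coe, Finset.mem_range]
          show mixedCount m n f < K
          omega)]
      apply Finset.sum_le_sum
      intro z _
      apply Finset.card_le_card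
      intro f hf
      simp only [Finset.mem_filter, Finset.mem_univ, true_and] at hf ⊢
      show f ∈ PMaux.Sz z
      simp only [PMaux.Sz, Finset.mem_filter, Finset.mem_univ, true_and]
      exact hf.2
    -- per-z bound
    have hz_bound : ∀ z ∈ Finset.range K, (PMaux.Nz m n z : ℝ) ≤
        (T : ℝ) * (2⁻¹ : ℝ) ^ (q + 1) * (2⁻¹ : ℝ) ^ ((K - 1 - z) / 2) := by
      intro z hz
      rw [Finset.mem_range] at hz
      set j := (3 * M - 4 * z) / 8 + 1 with hjdef
      have hchain := PMaux.chain hm hn z j (fun i hi => PMaux.quad hM21 (z + 2 * i) (by omega))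
      have hle : PMaux.Nz m n z * 2 ^ j ≤ T := le_trans hchain (PMaux.Nz_le_T _)
      have hleR : (PMaux.Nz m n z : ℝ) * 2 ^ j ≤ (T : ℝ) := by exact_mod_cast hle
      have h2j : (0:ℝ) < 2 ^ j := by positivity
      have step1 : (PMaux.Nz m n z : ℝ) ≤ (T : ℝ) * (2⁻¹ : ℝ) ^ j := by
        rw [inv_pow, ← div_eq_mul_inv, le_div_iff₀ h2j]
        exact hleR
      have hexp : q + 1 + (K - 1 - z) / 2 ≤ j := by omega
      have step2 : ((2:ℝ)⁻¹) ^ j ≤ (2⁻¹ : ℝ) ^ (q + 1 + (K - 1 - z) / 2) :=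
        pow_le_pow_of_le_one (by norm_num) (by norm_num) hexp
      calc (PMaux.Nz m n z : ℝ) ≤ (T : ℝ) * (2⁻¹ : ℝ) ^ j := step1
        _ ≤ (T : ℝ) * (2⁻¹ : ℝ) ^ (q + 1 + (K - 1 - z) / 2) := by
            apply mul_le_mul_of_nonneg_left step2 (by positivity)
        _ = (T : ℝ) * (2⁻¹ : ℝ) ^ (q + 1) * (2⁻¹ : ℝ) ^ ((K - 1 - z) / 2) := by
            rw [pow_add]; ring
    -- sum the bounds
    have hsum : ((Finset.univ.filter fun f : PerfectMatching (2 * m + 2 * n) =>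
        2 * mixedCount m n f < M).card : ℝ) ≤ (T : ℝ) * (2⁻¹ : ℝ) ^ (q + 1) * 4 := by
      have h1 : ((∑ z ∈ Finset.range K, PMaux.Nz m n z : ℕ) : ℝ) ≤
          ∑ z ∈ Finset.range K, ((T : ℝ) * (2⁻¹ : ℝ) ^ (q + 1) * (2⁻¹ : ℝ) ^ ((K - 1 - z) / 2)) := by
        push_cast
        exact Finset.sum_le_sum hz_bound
      have h2 : ∑ z ∈ Finset.range K, ((T : ℝ) * (2⁻¹ : ℝ) ^ (q + 1) * (2⁻¹ : ℝ) ^ ((K - 1 - z) / 2))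
          = (T : ℝ) * (2⁻¹ : ℝ) ^ (q + 1) * ∑ z ∈ Finset.range K, (2⁻¹ : ℝ) ^ ((K - 1 - z) / 2) := by
        rw [Finset.mul_sum]
      have h3 : ∑ z ∈ Finset.range K, ((2:ℝ)⁻¹) ^ ((K - 1 - z) / 2)
          = ∑ d ∈ Finset.range K, ((2:ℝ)⁻¹) ^ (d / 2) :=
        Finset.sum_range_reflect (fun d => ((2:ℝ)⁻¹) ^ (d / 2)) K
      have h4 := PMaux.geom K
      have hc : ((Finset.univ.filter fun f : PerfectMatching (2 * m + 2 * n) =>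
          2 * mixedCount m n f < M).card : ℝ) ≤ ((∑ z ∈ Finset.range K, PMaux.Nz m n z : ℕ) : ℝ) := by
        exact_mod_cast hcard
      have hfac : (0:ℝ) ≤ (T : ℝ) * (2⁻¹ : ℝ) ^ (q + 1) := by positivity
      calc ((Finset.univ.filter fun f : PerfectMatching (2 * m + 2 * n) =>
          2 * mixedCount m n f < M).card : ℝ)
          ≤ ((∑ z ∈ Finset.range K, PMaux.Nz m n z : ℕ) : ℝ) := hc
        _ ≤ ∑ z ∈ Finset.range K, ((T : ℝ) * (2⁻¹ : ℝ) ^ (q + 1) * (2⁻¹ : ℝ) ^ ((K - 1 - z) / 2)) := h1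
        _ = (T : ℝ) * (2⁻¹ : ℝ) ^ (q + 1) * ∑ z ∈ Finset.range K, (2⁻¹ : ℝ) ^ ((K - 1 - z) / 2) := h2
        _ = (T : ℝ) * (2⁻¹ : ℝ) ^ (q + 1) * ∑ d ∈ Finset.range K, (2⁻¹ : ℝ) ^ (d / 2) := by rw [h3]
        _ ≤ (T : ℝ) * (2⁻¹ : ℝ) ^ (q + 1) * 4 := mul_le_mul_of_nonneg_left h4 hfac
    -- final arithmetic
    have hq2 : 2 ≤ q := by omega
    have hFnat : 4 * M ≤ 20 * 2 ^ (q + 1) := by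
      have h1 : M ≤ 8 * q + 6 := by omega
      have h2 := PMaux.lemF q hq2
      have h3 : (2:ℕ) ^ (q + 1) = 2 * 2 ^ q := by rw [pow_succ]; ring
      omega
    have hFR : 4 * ((M : ℕ) : ℝ) ≤ 20 * 2 ^ (q + 1) := by exact_mod_cast hFnat
    rw [hfilter, div_le_div_iff₀ hTR hMR]
    have hpow : (0:ℝ) < (2:ℝ) ^ (q + 1) := by positivity
    have key : ((T : ℝ) * (2⁻¹ : ℝ) ^ (q + 1) * 4) * ((M : ℕ) : ℝ) ≤ 20 * (T : ℝ) := by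
      rw [inv_pow]
      rw [show (T : ℝ) * ((2:ℝ) ^ (q + 1))⁻¹ * 4 * ((M : ℕ) : ℝ)
        = (T : ℝ) * (4 * ((M : ℕ) : ℝ)) / (2:ℝ) ^ (q + 1) by ring]
      rw [div_le_iff₀ hpow]
      calc (T : ℝ) * (4 * ((M : ℕ) : ℝ)) ≤ (T : ℝ) * (20 * 2 ^ (q + 1)) := by
            apply mul_le_mul_of_nonneg_left hFR (by positivity)
        _ = 20 * (T : ℝ) * 2 ^ (q + 1) := by ring
    calc ((Finset.univ.filter fun f : PerfectMatching (2 * m + 2 * n) =>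
        2 * mixedCount m n f < M).card : ℝ) * ((M : ℕ) : ℝ)
        ≤ ((T : ℝ) * (2⁻¹ : ℝ) ^ (q + 1) * 4) * ((M : ℕ) : ℝ) := by
          apply mul_le_mul_of_nonneg_right hsum (by positivity)
      _ ≤ 20 * (T : ℝ) := key
end

section
/- Define lk: S_{2m+2n} → ℤ by lk(π) = (1/2) Σ_{i=1}^{2m} Σ_{j=2m+1}^{2m+2n} (−1)^{i+j} sgn(π(i) − π(j)). For a uniformly random π ∈ S_{2m+2n} and any integer v, P[lk(π) = v] ≤ 6/sqrt(min(m,n)). -/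
open Finset

def petalLk (m n : ℕ) (π : Equiv.Perm (Fin (2 * m + 2 * n))) : ℚ :=
  (1 / 2) * ∑ i : Fin (2 * m), ∑ j : Fin (2 * n),
    (-1 : ℚ) ^ (i.val + j.val) *
      (if (π (Fin.natAdd (2 * m) j)).val < (π (Fin.castAdd (2 * n) i)).val then 1 else -1)

namespace PetalAux

variable {m n : ℕ}

def av (m n : ℕ) (k : Fin (m + n)) : Fin (2 * m + 2 * n) := ⟨2 * k.val, by omega⟩
def bv (m n : ℕ) (k : Fin (m + n)) : Fin (2 * m + 2 * n) := ⟨2 * k.val + 1, by omega⟩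

def eps (m n : ℕ) (p q : Fin (2 * m + 2 * n)) : ℚ :=
  if p.val < 2 * m ∧ ¬ q.val < 2 * m then (-1) ^ (p.val + q.val)
  else if q.val < 2 * m ∧ ¬ p.val < 2 * m then -(-1) ^ (p.val + q.val) else 0

lemma av_val (k : Fin (m+n)) : (av m n k).val = 2*k.val := rfl
lemma bv_val (k : Fin (m+n)) : (bv m n k).val = 2*k.val + 1 := rfl

lemma av_ne_bv (k : Fin (m + n)) : av m n k ≠ bv m n k := by
  simp [av, bv, Fin.ext_iff]

lemma swap_compare {N : ℕ} (a b x y : Fin N) (hab : a.val + 1 = b.val)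
    (hxy : x ≠ y) (h1 : ¬(x = a ∧ y = b)) (h2 : ¬(x = b ∧ y = a)) :
    ((Equiv.swap a b y).val < (Equiv.swap a b x).val ↔ y.val < x.val) := by
  have hvi : ∀ u w : Fin N, u ≠ w → u.val ≠ w.val := fun u w h => by
    simpa [Fin.ext_iff] using h
  by_cases hxa : x = a
  · subst hxa
    have hyb : y ≠ b := fun h => h1 ⟨rfl, h⟩
    have hya : y ≠ x := fun h => hxy h.symm
    rw [Equiv.swap_apply_left, Equiv.swap_apply_of_ne_of_ne hya hyb]
    have := hvi y x hya; have := hvi y b hyb; omega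
  · by_cases hxb : x = b
    · subst hxb
      have hya : y ≠ a := fun h => h2 ⟨rfl, h⟩
      have hyb : y ≠ x := fun h => hxy h.symm
      rw [Equiv.swap_apply_right, Equiv.swap_apply_of_ne_of_ne hya hyb]
      have := hvi y a hya; have := hvi y x hyb; omega
    · rw [Equiv.swap_apply_of_ne_of_ne hxa hxb]
      by_cases hya : y = a
      · subst hya
        rw [Equiv.swap_apply_left]
        have := hvi x y hxa; have := hvi x b hxb; omega
      · by_cases hyb : y = b
        · subst hyb
          rw [Equiv.swap_apply_right]
          have := hvi x a hxa; have := hvi x y hxb; omega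
        · rw [Equiv.swap_apply_of_ne_of_ne hya hyb]

lemma sum_castAdd (p : Fin (2*m+2*n)) (g : Fin (2*m) → ℚ) :
    ∑ i : Fin (2*m), (if Fin.castAdd (2*n) i = p then g i else 0)
      = if hp : p.val < 2*m then g ⟨p.val, hp⟩ else 0 := by
  split_ifs with hp
  · rw [Finset.sum_eq_single_of_mem ⟨p.val, hp⟩ (Finset.mem_univ _)]
    · simp [Fin.ext_iff]
    · intro i _ hi
      rw [if_neg]
      simp only [Fin.ext_iff, Fin.coe_castAdd] at hi ⊢
      exact fun h => hi (Fin.val_injective h)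
  · rw [Finset.sum_eq_zero]
    intro i _
    rw [if_neg]
    simp only [Fin.ext_iff, Fin.coe_castAdd]
    exact fun h => hp (h ▸ i.isLt)

lemma sum_natAdd (q : Fin (2*m+2*n)) (g : Fin (2*n) → ℚ) :
    ∑ j : Fin (2*n), (if Fin.natAdd (2*m) j = q then g j else 0)
      = if hq : 2*m ≤ q.val then g ⟨q.val - 2*m, by omega⟩ else 0 := by
  split_ifs with hq
  · rw [Finset.sum_eq_single_of_mem ⟨q.val - 2*m, by omega⟩ (Finset.mem_univ _)]
    · rw [if_pos]
      simp only [Fin.ext_iff, Fin.coe_natAdd]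
      omega
    · intro j _ hj
      rw [if_neg]
      intro h
      apply hj
      have h' : 2*m + j.val = q.val := by simpa [Fin.ext_iff] using h
      apply Fin.val_injective
      show j.val = q.val - 2*m
      omega
  · rw [Finset.sum_eq_zero]
    intro j _
    rw [if_neg]
    simp only [Fin.ext_iff, Fin.coe_natAdd]
    omega

lemma neg_one_pow_sub_2m (t : ℕ) (h : 2*m ≤ t) : (-1:ℚ)^(t - 2*m) = (-1)^t := by
  conv_rhs => rw [show t = t - 2*m + 2*m from by omega]
  rw [pow_add, pow_mul, neg_one_sq, one_pow, mul_one]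

lemma stepA (π : Equiv.Perm (Fin (2*m+2*n))) (k : Fin (m+n)) :
    petalLk m n (Equiv.swap (av m n k) (bv m n k) * π)
      = petalLk m n π + eps m n (π.symm (av m n k)) (π.symm (bv m n k)) := by
  set a := av m n k with ha
  set b := bv m n k with hb
  have hab : a.val + 1 = b.val := rfl
  have habne : a ≠ b := av_ne_bv k
  set p := π.symm a with hp
  set q := π.symm b with hq
  have hpq : p ≠ q := fun h => habne (π.symm.injective h)
  have key : ∀ (i : Fin (2*m)) (j : Fin (2*n)),
      (-1:ℚ)^(i.val+j.val) * (if (Equiv.swap a b (π (Fin.natAdd (2*m) j))).val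
          < (Equiv.swap a b (π (Fin.castAdd (2*n) i))).val then 1 else -1)
      = (-1:ℚ)^(i.val+j.val) * (if (π (Fin.natAdd (2*m) j)).val
            < (π (Fin.castAdd (2*n) i)).val then 1 else -1)
        + (if Fin.castAdd (2*n) i = p then 2*(-1:ℚ)^(i.val) else 0)
            * (if Fin.natAdd (2*m) j = q then (-1:ℚ)^(j.val) else 0)
        + (if Fin.castAdd (2*n) i = q then (-2)*(-1:ℚ)^(i.val) else 0)
            * (if Fin.natAdd (2*m) j = p then (-1:ℚ)^(j.val) else 0) := by
    intro i j
    have hxa : π (Fin.castAdd (2*n) i) = a ↔ Fin.castAdd (2*n) i = p :=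
      (Equiv.eq_symm_apply π).symm
    have hxb : π (Fin.castAdd (2*n) i) = b ↔ Fin.castAdd (2*n) i = q :=
      (Equiv.eq_symm_apply π).symm
    have hya : π (Fin.natAdd (2*m) j) = a ↔ Fin.natAdd (2*m) j = p :=
      (Equiv.eq_symm_apply π).symm
    have hyb : π (Fin.natAdd (2*m) j) = b ↔ Fin.natAdd (2*m) j = q :=
      (Equiv.eq_symm_apply π).symm
    have hxy : π (Fin.castAdd (2*n) i) ≠ π (Fin.natAdd (2*m) j) := by
      intro h
      have := π.injective h
      simp only [Fin.ext_iff, Fin.coe_castAdd, Fin.coe_natAdd] at this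
      omega
    by_cases c1 : π (Fin.castAdd (2*n) i) = a ∧ π (Fin.natAdd (2*m) j) = b
    · rw [c1.1, c1.2, Equiv.swap_apply_left, Equiv.swap_apply_right]
      rw [if_pos (show a.val < b.val by omega), if_neg (show ¬ b.val < a.val by omega),
        if_pos (hxa.mp c1.1), if_pos (hyb.mp c1.2),
        if_neg (show ¬ Fin.castAdd (2*n) i = q from
          fun h => habne (c1.1.symm.trans (hxb.mpr h)))]
      rw [pow_add]; ring
    · by_cases c2 : π (Fin.castAdd (2*n) i) = b ∧ π (Fin.natAdd (2*m) j) = a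
      · rw [c2.1, c2.2, Equiv.swap_apply_right, Equiv.swap_apply_left]
        rw [if_neg (show ¬ b.val < a.val by omega), if_pos (show a.val < b.val by omega),
          if_neg (show ¬ Fin.castAdd (2*n) i = p from
            fun h => habne ((hxa.mpr h).symm.trans c2.1)),
          if_pos (hxb.mp c2.1), if_pos (hya.mp c2.2)]
        rw [pow_add]; ring
      · have hcmp := swap_compare a b (π (Fin.castAdd (2*n) i)) (π (Fin.natAdd (2*m) j))
          hab hxy c1 c2
      -- both indicator products vanish
        have e1 : (if Fin.castAdd (2*n) i = p then 2*(-1:ℚ)^(i.val) else 0)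
            * (if Fin.natAdd (2*m) j = q then (-1:ℚ)^(j.val) else 0) = 0 := by
          split_ifs with h1 h2
          · exact absurd ⟨hxa.mpr h1, hyb.mpr h2⟩ c1
          all_goals ring
        have e2 : (if Fin.castAdd (2*n) i = q then (-2)*(-1:ℚ)^(i.val) else 0)
            * (if Fin.natAdd (2*m) j = p then (-1:ℚ)^(j.val) else 0) = 0 := by
          split_ifs with h1 h2
          · exact absurd ⟨hxb.mpr h1, hya.mpr h2⟩ c2
          all_goals ring
        rw [e1, e2, add_zero, add_zero]
        congr 1
        by_cases hlt : (π (Fin.natAdd (2*m) j)).val < (π (Fin.castAdd (2*n) i)).val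
        · rw [if_pos hlt, if_pos (hcmp.mpr hlt)]
        · rw [if_neg hlt, if_neg (fun h => hlt (hcmp.mp h))]
  have expand : petalLk m n (Equiv.swap a b * π) = petalLk m n π
      + (1/2) * ((∑ i : Fin (2*m), if Fin.castAdd (2*n) i = p then 2*(-1:ℚ)^(i.val) else 0)
          * (∑ j : Fin (2*n), if Fin.natAdd (2*m) j = q then (-1:ℚ)^(j.val) else 0))
      + (1/2) * ((∑ i : Fin (2*m), if Fin.castAdd (2*n) i = q then (-2)*(-1:ℚ)^(i.val) else 0)
          * (∑ j : Fin (2*n), if Fin.natAdd (2*m) j = p then (-1:ℚ)^(j.val) else 0)) := by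
    unfold petalLk
    simp only [Equiv.Perm.mul_apply]
    erw [Finset.sum_congr rfl (fun i _ => Finset.sum_congr rfl (fun j _ => key i j))]
    simp only [Finset.sum_add_distrib, ← Finset.sum_mul, ← Finset.mul_sum]
    ring
  rw [expand, sum_castAdd, sum_castAdd, sum_natAdd, sum_natAdd]
  unfold eps
  by_cases hpb : p.val < 2*m <;> by_cases hqb : q.val < 2*m
  · rw [dif_pos hpb, dif_neg (show ¬ 2*m ≤ q.val by omega), dif_pos hqb,
      dif_neg (show ¬ 2*m ≤ p.val by omega)]
    rw [if_neg (by tauto), if_neg (by tauto)]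
    ring
  · rw [dif_pos hpb, dif_pos (show 2*m ≤ q.val by omega), dif_neg hqb,
      dif_neg (show ¬ 2*m ≤ p.val by omega)]
    rw [if_pos ⟨hpb, hqb⟩]
    simp only [Fin.val_mk]
    rw [neg_one_pow_sub_2m q.val (by omega), pow_add]
    ring
  · rw [dif_neg hpb, dif_neg (show ¬ 2*m ≤ q.val by omega), dif_pos hqb,
      dif_pos (show 2*m ≤ p.val by omega)]
    rw [if_neg (by tauto), if_pos ⟨hqb, hpb⟩]
    simp only [Fin.val_mk]
    rw [neg_one_pow_sub_2m p.val (by omega), pow_add]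
    ring
  · rw [dif_neg hpb, dif_pos (show 2*m ≤ q.val by omega), dif_neg hqb,
      dif_pos (show 2*m ≤ p.val by omega)]
    rw [if_neg (by tauto), if_neg (by tauto)]
    ring

lemma swap_fix_of_ne (k k' : Fin (m+n)) (hkk : k' ≠ k) :
    Equiv.swap (av m n k') (bv m n k') (av m n k) = av m n k
      ∧ Equiv.swap (av m n k') (bv m n k') (bv m n k) = bv m n k := by
  have h : k'.val ≠ k.val := fun h => hkk (Fin.val_injective h)
  constructor <;>
    refine Equiv.swap_apply_of_ne_of_ne ?_ ?_ <;>
    · intro hcon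
      have := congrArg Fin.val hcon
      simp only [av_val, bv_val] at this
      omega

lemma swap_commute (k k' : Fin (m+n)) (hkk : k ≠ k') :
    Commute (Equiv.swap (av m n k) (bv m n k)) (Equiv.swap (av m n k') (bv m n k')) := by
  apply Equiv.Perm.Disjoint.commute
  intro x
  by_cases hx : x = av m n k ∨ x = bv m n k
  · right
    rcases hx with rfl | rfl
    · exact (swap_fix_of_ne k k' (Ne.symm hkk)).1
    · exact (swap_fix_of_ne k k' (Ne.symm hkk)).2
  · left
    push_neg at hx
    exact Equiv.swap_apply_of_ne_of_ne hx.1 hx.2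

/-- product of the swaps indexed by `S` -/
def sigmaS (m n : ℕ) (S : Finset (Fin (m+n))) : Equiv.Perm (Fin (2*m+2*n)) :=
  S.noncommProd (fun k => Equiv.swap (av m n k) (bv m n k))
    (fun k _ k' _ h => swap_commute k k' h)

lemma sigmaS_empty : sigmaS m n ∅ = 1 := Finset.noncommProd_empty _ _

lemma sigmaS_insert (k : Fin (m+n)) (S : Finset (Fin (m+n))) (hk : k ∉ S) :
    sigmaS m n (insert k S) = Equiv.swap (av m n k) (bv m n k) * sigmaS m n S :=
  Finset.noncommProd_insert_of_notMem _ _ _ _ hk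

lemma sigmaS_fix (S : Finset (Fin (m+n))) (k : Fin (m+n)) (hk : k ∉ S) :
    sigmaS m n S (av m n k) = av m n k ∧ sigmaS m n S (bv m n k) = bv m n k := by
  induction S using Finset.induction_on with
  | empty => simp [sigmaS_empty]
  | @insert k' S' hx ih =>
    have hk' : k ∉ S' := fun h => hk (Finset.mem_insert_of_mem h)
    have hne : k' ≠ k := fun h => hk (h ▸ Finset.mem_insert_self k' S')
    rw [sigmaS_insert k' S' hx]
    constructor
    · rw [Equiv.Perm.mul_apply, (ih hk').1, (swap_fix_of_ne k k' hne).1]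
    · rw [Equiv.Perm.mul_apply, (ih hk').2, (swap_fix_of_ne k k' hne).2]

lemma stepB (π : Equiv.Perm (Fin (2*m+2*n))) (S : Finset (Fin (m+n))) :
    petalLk m n (sigmaS m n S * π)
      = petalLk m n π + ∑ k ∈ S, eps m n (π.symm (av m n k)) (π.symm (bv m n k)) := by
  induction S using Finset.induction_on with
  | empty => simp [sigmaS_empty]
  | @insert k S' hx ih =>
    rw [sigmaS_insert k S' hx, mul_assoc, stepA (sigmaS m n S' * π) k, ih,
      Finset.sum_insert hx]
    have h1 : (sigmaS m n S' * π).symm (av m n k) = π.symm (av m n k) := by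
      rw [Equiv.symm_apply_eq, Equiv.Perm.mul_apply, Equiv.apply_symm_apply,
        (sigmaS_fix S' k hx).1]
    have h2 : (sigmaS m n S' * π).symm (bv m n k) = π.symm (bv m n k) := by
      rw [Equiv.symm_apply_eq, Equiv.Perm.mul_apply, Equiv.apply_symm_apply,
        (sigmaS_fix S' k hx).2]
    rw [h1, h2]
    ring

lemma stepC (v : ℚ) :
    (univ.filter fun π : Equiv.Perm (Fin (2*m+2*n)) => petalLk m n π = v).card * 2^(m+n)
      = ∑ π : Equiv.Perm (Fin (2*m+2*n)),
          ((univ : Finset (Finset (Fin (m+n)))).filter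
            fun S => petalLk m n (sigmaS m n S * π) = v).card := by
  have swap0 : ∑ π : Equiv.Perm (Fin (2*m+2*n)),
      ((univ : Finset (Finset (Fin (m+n)))).filter
        fun S => petalLk m n (sigmaS m n S * π) = v).card
      = ∑ S : Finset (Fin (m+n)),
          ((univ : Finset (Equiv.Perm (Fin (2*m+2*n)))).filter
            fun π => petalLk m n (sigmaS m n S * π) = v).card := by
    simp_rw [Finset.card_filter]
    rw [Finset.sum_comm]
  rw [swap0]
  have each : ∀ S : Finset (Fin (m+n)),
      ((univ : Finset (Equiv.Perm (Fin (2*m+2*n)))).filter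
        fun π => petalLk m n (sigmaS m n S * π) = v).card
      = (univ.filter fun π : Equiv.Perm (Fin (2*m+2*n)) => petalLk m n π = v).card := by
    intro S
    apply Finset.card_bij (fun π _ => sigmaS m n S * π)
    · intro π hπ
      simp only [Finset.mem_filter, Finset.mem_univ, true_and] at hπ ⊢
      exact hπ
    · intro π1 _ π2 _ h
      exact mul_left_cancel h
    · intro π hπ
      refine ⟨(sigmaS m n S)⁻¹ * π, ?_, ?_⟩
      · simp only [Finset.mem_filter, Finset.mem_univ, true_and] at hπ ⊢
        rw [← mul_assoc, mul_inv_cancel, one_mul]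
        exact hπ
      · rw [← mul_assoc, mul_inv_cancel, one_mul]
  rw [Finset.sum_congr rfl (fun S _ => each S), Finset.sum_const, Finset.card_univ,
    Fintype.card_finset, Fintype.card_fin, smul_eq_mul, mul_comm]

lemma centralBinom_sq_le (t : ℕ) : (Nat.centralBinom t)^2 * (2*t+1) ≤ 16^t := by
  induction t with
  | zero => simp [Nat.centralBinom]
  | succ t ih =>
    have key := Nat.succ_mul_centralBinom_succ t
    have h2 : (t+1)^2 * ((Nat.centralBinom (t+1))^2 * (2*(t+1)+1))
        = (2*t+3) * (2*(2*t+1)) * (2*(2*t+1)) * (Nat.centralBinom t)^2 := by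
      calc (t+1)^2 * ((Nat.centralBinom (t+1))^2 * (2*(t+1)+1))
          = ((t+1) * Nat.centralBinom (t+1))^2 * (2*t+3) := by ring
        _ = (2*(2*t+1) * Nat.centralBinom t)^2 * (2*t+3) := by rw [key]
        _ = _ := by ring
    have h3 : (2*t+3) * (2*(2*t+1)) * (2*(2*t+1)) * (Nat.centralBinom t)^2
        ≤ (t+1)^2 * 16^(t+1) := by
      calc (2*t+3) * (2*(2*t+1)) * (2*(2*t+1)) * (Nat.centralBinom t)^2
          = (4*(2*t+1)*(2*t+3)) * ((Nat.centralBinom t)^2 * (2*t+1)) := by ring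
        _ ≤ (4*(2*t+2)*(2*t+2)) * 16^t := by
            apply Nat.mul_le_mul _ ih
            nlinarith
        _ = (t+1)^2 * 16^(t+1) := by ring
    exact Nat.le_of_mul_le_mul_left (h2.le.trans h3) (by positivity)

lemma choose_half_sq_le (z : ℕ) : (z.choose (z/2))^2 * z ≤ 4^z := by
  rcases Nat.even_or_odd z with ⟨t, rfl⟩ | ⟨t, rfl⟩
  · have hdiv : (t+t)/2 = t := by omega
    rw [hdiv]
    have hcb : Nat.centralBinom t = (t+t).choose t := by
      rw [Nat.centralBinom, two_mul]
    calc ((t+t).choose t)^2 * (t+t) ≤ ((t+t).choose t)^2 * (2*t+1) := by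
          apply Nat.mul_le_mul_left; omega
      _ = (Nat.centralBinom t)^2 * (2*t+1) := by rw [hcb]
      _ ≤ 16^t := centralBinom_sq_le t
      _ = 4^(t+t) := by rw [show t+t = 2*t from by omega, pow_mul]; norm_num
  · have hdiv : (2*t+1)/2 = t := by omega
    rw [hdiv]
    have hdup : Nat.centralBinom (t+1) = 2 * ((2*t+1).choose t) := by
      rw [Nat.centralBinom]
      have h1 : 2*(t+1) = (2*t+1)+1 := by ring
      rw [h1, Nat.choose_succ_succ]
      have h2 : (2*t+1).choose (t+1) = (2*t+1).choose t := by
        rw [← Nat.choose_symm (by omega : t+1 ≤ 2*t+1)]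
        congr 1
        omega
      rw [h2]; ring
    have key := centralBinom_sq_le (t+1)
    rw [hdup] at key
    have key2 : 4 * (((2*t+1).choose t)^2 * (2*t+1)) ≤ 4 * 4^(2*t+1) := by
      calc 4 * (((2*t+1).choose t)^2 * (2*t+1))
          ≤ (2 * ((2*t+1).choose t))^2 * (2*(t+1)+1) := by nlinarith [Nat.zero_le (((2*t+1).choose t)^2)]
        _ ≤ 16^(t+1) := key
        _ = 4 * 4^(2*t+1) := by
            rw [show (16:ℕ) = 4^2 from rfl, ← pow_mul]
            rw [show 2*(t+1) = (2*t+1)+1 from by ring, pow_succ]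
            ring
    exact Nat.le_of_mul_le_mul_left key2 (by norm_num)

lemma choose_half_le_real (z : ℕ) : (z.choose (z/2) : ℝ) * Real.sqrt z ≤ 2^z := by
  have h := choose_half_sq_le z
  have h1 : ((z.choose (z/2) : ℝ) * Real.sqrt z)^2 ≤ ((2:ℝ)^z)^2 := by
    have e1 : ((z.choose (z/2):ℝ) * Real.sqrt z)^2 = (z.choose (z/2):ℝ)^2 * z := by
      rw [mul_pow, Real.sq_sqrt (by positivity)]
    have e2 : ((2:ℝ)^z)^2 = (4:ℝ)^z := by
      rw [← pow_mul, mul_comm, pow_mul]; norm_num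
    rw [e1, e2]
    exact_mod_cast h
  have h2 := Real.sqrt_le_sqrt h1
  rwa [Real.sqrt_sq (by positivity), Real.sqrt_sq (by positivity)] at h2

lemma LO_count (K : ℕ) (ε : Fin K → ℚ) (hε : ∀ k, ε k = 0 ∨ ε k = 1 ∨ ε k = -1) (w : ℚ) :
    ((univ : Finset (Finset (Fin K))).filter fun S => ∑ k ∈ S, ε k = w).card
      ≤ 2^(K - (univ.filter fun k => ε k ≠ 0).card)
        * Nat.choose (univ.filter fun k => ε k ≠ 0).card
            ((univ.filter fun k => ε k ≠ 0).card / 2) := by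
  classical
  set NZ := univ.filter fun k => ε k ≠ 0 with hNZ
  set Zo := univ.filter fun k => ¬ ε k ≠ 0 with hZo
  set P := univ.filter fun k => ε k = 1 with hP
  set M := univ.filter fun k => ε k = -1 with hM
  set F := (univ : Finset (Finset (Fin K))).filter (fun S => ∑ k ∈ S, ε k = w) with hF
  have hZoCard : Zo.card = K - NZ.card := by
    rw [hZo, hNZ, Finset.filter_not, Finset.card_sdiff_of_subset (Finset.filter_subset _ _),
      Finset.card_univ, Fintype.card_fin]
  have hPM : ∀ T : Finset (Fin K), T ∩ P ⊆ NZ ∧ (M \ T) ⊆ NZ := by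
    intro T
    constructor
    · intro x hx
      have := (Finset.mem_inter.mp hx).2
      simp only [hP, Finset.mem_filter] at this
      simp only [hNZ, Finset.mem_filter, Finset.mem_univ, true_and]
      rw [this.2]; norm_num
    · intro x hx
      have := (Finset.mem_sdiff.mp hx).1
      simp only [hM, Finset.mem_filter] at this
      simp only [hNZ, Finset.mem_filter, Finset.mem_univ, true_and]
      rw [this.2]; norm_num
  have sumPM : ∀ S : Finset (Fin K),
      ∑ k ∈ S, ε k = ((S ∩ P).card : ℚ) - ((S ∩ M).card : ℚ) := by
    intro S
    induction S using Finset.induction_on with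
    | empty => simp
    | @insert a S ha ih =>
      rw [Finset.sum_insert ha, ih]
      rcases hε a with h0 | h1 | hm1
      · have haP : a ∉ P := by simp [hP, h0]
        have haM : a ∉ M := by simp [hM, h0]
        rw [Finset.insert_inter_of_notMem haP, Finset.insert_inter_of_notMem haM, h0]
        ring
      · have haP : a ∈ P := by simp [hP, h1]
        have haM : a ∉ M := by
          simp only [hM, Finset.mem_filter, Finset.mem_univ, true_and, h1]
          norm_num
        rw [Finset.insert_inter_of_mem haP, Finset.insert_inter_of_notMem haM,
          Finset.card_insert_of_notMem (fun h => ha (Finset.mem_inter.mp h).1), h1]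
        push_cast; ring
      · have haP : a ∉ P := by
          simp only [hP, Finset.mem_filter, Finset.mem_univ, true_and, hm1]
          norm_num
        have haM : a ∈ M := by simp [hM, hm1]
        rw [Finset.insert_inter_of_notMem haP, Finset.insert_inter_of_mem haM,
          Finset.card_insert_of_notMem (fun h => ha (Finset.mem_inter.mp h).1), hm1]
        push_cast; ring
  rcases Finset.eq_empty_or_nonempty F with hFe | ⟨S0, hS0⟩
  · rw [hFe]; simp
  · have hS0sum : ∑ k ∈ S0, ε k = w := (Finset.mem_filter.mp hS0).2
    set c := (S0 ∩ P).card + (M \ S0).card with hc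
    have himage : ∀ S ∈ F, ((S ∩ P) ∪ (M \ S)).card = c := by
      intro S hS
      have h1 : ∑ k ∈ S, ε k = w := (Finset.mem_filter.mp hS).2
      have h2 : ((S ∩ P).card : ℚ) - ((S ∩ M).card : ℚ)
          = ((S0 ∩ P).card : ℚ) - ((S0 ∩ M).card : ℚ) := by
        rw [← sumPM, ← sumPM, h1, hS0sum]
      have h2' : (S ∩ P).card + (S0 ∩ M).card = (S0 ∩ P).card + (S ∩ M).card := by
        have : ((S ∩ P).card : ℚ) + ((S0 ∩ M).card : ℚ)
            = ((S0 ∩ P).card : ℚ) + ((S ∩ M).card : ℚ) := by linarith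
        exact_mod_cast this
      have hMS : (M \ S).card + (M ∩ S).card = M.card :=
        Finset.card_sdiff_add_card_inter M S
      have hMS0 : (M \ S0).card + (M ∩ S0).card = M.card :=
        Finset.card_sdiff_add_card_inter M S0
      have hdisj : Disjoint (S ∩ P) (M \ S) := by
        rw [Finset.disjoint_left]
        intro x hx1 hx2
        exact (Finset.mem_sdiff.mp hx2).2 (Finset.mem_inter.mp hx1).1
      rw [Finset.card_union_of_disjoint hdisj]
      rw [Finset.inter_comm S M, Finset.inter_comm S0 M] at h2'
      omega
    have hmaps : ∀ S ∈ F, (S ∩ Zo, (S ∩ P) ∪ (M \ S))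
        ∈ Zo.powerset ×ˢ NZ.powersetCard c := by
      intro S hS
      rw [Finset.mem_product]
      constructor
      · exact Finset.mem_powerset.mpr Finset.inter_subset_right
      · rw [Finset.mem_powersetCard]
        exact ⟨Finset.union_subset (hPM S).1 (hPM S).2, himage S hS⟩
    have hinj : Set.InjOn (fun S => (S ∩ Zo, (S ∩ P) ∪ (M \ S))) F := by
      intro S hS S' hS' heq
      simp only [Prod.mk.injEq] at heq
      obtain ⟨e1, e2⟩ := heq
      ext k
      rcases hε k with h0 | h1 | hm1
      · have hkZ : k ∈ Zo := by simp [hZo, h0]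
        constructor
        · intro hk
          have h := Finset.mem_inter.mpr ⟨hk, hkZ⟩
          rw [e1] at h
          exact (Finset.mem_inter.mp h).1
        · intro hk
          have h := Finset.mem_inter.mpr ⟨hk, hkZ⟩
          rw [← e1] at h
          exact (Finset.mem_inter.mp h).1
      · have hkP : k ∈ P := by simp [hP, h1]
        have hkM : k ∉ M := by
          simp only [hM, Finset.mem_filter, Finset.mem_univ, true_and, h1]
          norm_num
        have key : ∀ T : Finset (Fin K), k ∈ T ↔ k ∈ (T ∩ P) ∪ (M \ T) := by
          intro T
          by_cases hkT : k ∈ T <;>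
            simp [Finset.mem_union, Finset.mem_inter, Finset.mem_sdiff, hkT, hkM, hkP]
        rw [key S, key S', e2]
      · have hkM : k ∈ M := by simp [hM, hm1]
        have hkP : k ∉ P := by
          simp only [hP, Finset.mem_filter, Finset.mem_univ, true_and, hm1]
          norm_num
        have key : ∀ T : Finset (Fin K), k ∈ T ↔ k ∉ (T ∩ P) ∪ (M \ T) := by
          intro T
          by_cases hkT : k ∈ T <;>
            simp [Finset.mem_union, Finset.mem_inter, Finset.mem_sdiff, hkT, hkM, hkP]
        rw [key S, key S', e2]
    calc F.card ≤ (Zo.powerset ×ˢ NZ.powersetCard c).card :=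
        Finset.card_le_card_of_injOn _ hmaps hinj
      _ = 2^Zo.card * (NZ.card.choose c) := by
          rw [Finset.card_product, Finset.card_powerset, Finset.card_powersetCard]
      _ ≤ 2^(K - NZ.card) * (NZ.card.choose (NZ.card / 2)) := by
          rw [hZoCard]
          exact Nat.mul_le_mul_left _ (Nat.choose_le_middle c NZ.card)

lemma exists_perm_extend {α : Type*} [DecidableEq α] (s : Finset α) (g : α → α)
    (hg : Set.InjOn g s) : ∃ π : Equiv.Perm α, ∀ x ∈ s, π x = g x := by
  classical
  induction s using Finset.induction_on with
  | empty => exact ⟨1, by simp⟩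
  | @insert a s ha ih =>
    obtain ⟨π', hπ'⟩ := ih (hg.mono (Finset.coe_subset.mpr (Finset.subset_insert a s)))
    refine ⟨π' * Equiv.swap a (π'.symm (g a)), ?_⟩
    intro x hx
    rcases Finset.mem_insert.mp hx with rfl | hxs
    · simp
    · have hxa : x ≠ a := fun h => ha (h ▸ hxs)
      have hxc : x ≠ π'.symm (g a) := by
        intro h
        have h2 : π' x = g a := by rw [h, Equiv.apply_symm_apply]
        rw [hπ' x hxs] at h2
        exact hxa (hg (Finset.mem_coe.mpr (Finset.mem_insert_of_mem hxs))
          (Finset.mem_coe.mpr (Finset.mem_insert_self a s)) h2)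
      rw [Equiv.Perm.mul_apply, Equiv.swap_apply_of_ne_of_ne hxa hxc, hπ' x hxs]

lemma card_fixing {N : ℕ} (s : Finset (Fin N)) :
    ((univ : Finset (Equiv.Perm (Fin N))).filter fun π => ∀ x ∈ s, π x = x).card
      = Nat.factorial (N - s.card) := by
  classical
  rw [(Fintype.card_subtype _).symm]
  have e1 : {π : Equiv.Perm (Fin N) // ∀ x ∈ s, π x = x}
      ≃ {π : Equiv.Perm (Fin N) // ∀ x, ¬ (x ∉ s) → π x = x} :=
    Equiv.subtypeEquivRight (fun π => by
      constructor
      · intro h x hx; exact h x (not_not.mp hx)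
      · intro h x hx; exact h x (not_not_intro hx))
  have e2 : Equiv.Perm {x : Fin N // x ∉ s}
      ≃ {π : Equiv.Perm (Fin N) // ∀ x, ¬ (x ∉ s) → π x = x} :=
    Equiv.Perm.subtypeEquivSubtypePerm _
  rw [Fintype.card_congr (e1.trans e2.symm), Fintype.card_perm]
  congr 1
  have : Fintype.card {x : Fin N // x ∉ s} = Fintype.card (Fin N) - s.card := by
    rw [Fintype.card_subtype_compl, Fintype.card_coe]
  rw [this, Fintype.card_fin]

lemma card_extending {N : ℕ} (s : Finset (Fin N)) (g : Fin N → Fin N)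
    (hg : Set.InjOn g s) :
    ((univ : Finset (Equiv.Perm (Fin N))).filter fun π => ∀ x ∈ s, π x = g x).card
      = Nat.factorial (N - s.card) := by
  classical
  obtain ⟨π0, hπ0⟩ := exists_perm_extend s g hg
  rw [← card_fixing s]
  apply Finset.card_bij (fun π _ => π0⁻¹ * π)
  · intro π hπ
    simp only [Finset.mem_filter, Finset.mem_univ, true_and] at hπ ⊢
    intro x hx
    rw [Equiv.Perm.mul_apply, hπ x hx, ← hπ0 x hx, ← Equiv.Perm.mul_apply, inv_mul_cancel, Equiv.Perm.one_apply]
  · intro π1 _ π2 _ h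
    exact mul_left_cancel h
  · intro τ hτ
    simp only [Finset.mem_filter, Finset.mem_univ, true_and] at hτ
    refine ⟨π0 * τ, ?_, by rw [← mul_assoc, inv_mul_cancel, one_mul]⟩
    simp only [Finset.mem_filter, Finset.mem_univ, true_and]
    intro x hx
    rw [Equiv.Perm.mul_apply, hτ x hx, hπ0 x hx]

lemma sum_two_points {N : ℕ} (a b : Fin N) (hab : a ≠ b) (G : Fin N → Fin N → ℕ) :
    ∑ π : Equiv.Perm (Fin N), G (π a) (π b)
      = Nat.factorial (N - 2) * ∑ y ∈ (univ : Finset (Fin N × Fin N)).filter (fun y => y.1 ≠ y.2),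
          G y.1 y.2 := by
  classical
  rw [← Finset.sum_fiberwise_of_maps_to (g := fun π : Equiv.Perm (Fin N) => (π a, π b))
      (t := (univ : Finset (Fin N × Fin N)).filter (fun y => y.1 ≠ y.2))
      (fun π _ => by
        simp only [Finset.mem_filter, Finset.mem_univ, true_and]
        exact fun h => hab (π.injective h))]
  rw [Finset.mul_sum]
  apply Finset.sum_congr rfl
  intro y hy
  have hy12 : y.1 ≠ y.2 := (Finset.mem_filter.mp hy).2
  have hconst : ∀ π ∈ univ.filter (fun π : Equiv.Perm (Fin N) => (π a, π b) = y),
      G (π a) (π b) = G y.1 y.2 := by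
    intro π hπ
    have h := (Finset.mem_filter.mp hπ).2
    rw [← h]
  rw [Finset.sum_congr rfl hconst, Finset.sum_const, smul_eq_mul]
  have hfe : (univ.filter (fun π : Equiv.Perm (Fin N) => (π a, π b) = y)) =
      (univ.filter fun π : Equiv.Perm (Fin N) =>
        ∀ x ∈ ({a, b} : Finset (Fin N)), π x = (if x = a then y.1 else y.2)) := by
    apply Finset.filter_congr
    intro π _
    constructor
    · intro h x hx
      rw [Prod.ext_iff] at h
      rcases Finset.mem_insert.mp hx with rfl | hx2
      · rw [if_pos rfl]; exact h.1
      · rw [Finset.mem_singleton.mp hx2, if_neg (Ne.symm hab)]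
        exact (Finset.mem_singleton.mp hx2) ▸ h.2
    · intro h
      have h1 := h a (Finset.mem_insert_self a _)
      have h2 := h b (Finset.mem_insert_of_mem (Finset.mem_singleton_self b))
      rw [if_pos rfl] at h1
      rw [if_neg (Ne.symm hab)] at h2
      rw [Prod.ext_iff]
      exact ⟨h1, h2⟩
  rw [hfe, card_extending _ _ ?_, Finset.card_insert_of_notMem (by simp [hab]),
    Finset.card_singleton, mul_comm]
  intro x hx x' hx' h
  simp only [Finset.coe_insert, Set.mem_insert_iff, Finset.coe_singleton,
    Set.mem_singleton_iff] at hx hx'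
  rcases hx with rfl | rfl <;> rcases hx' with rfl | rfl
  · rfl
  · exact absurd (by simpa [hab, Ne.symm hab] using h : y.1 = y.2) hy12
  · exact absurd (by simpa [hab, Ne.symm hab] using h : y.2 = y.1).symm hy12
  · rfl

lemma sum_four_points {N : ℕ} (a b c d : Fin N) (hab : a ≠ b) (hac : a ≠ c) (had : a ≠ d)
    (hbc : b ≠ c) (hbd : b ≠ d) (hcd : c ≠ d) (G : Fin N → Fin N → Fin N → Fin N → ℕ) :
    ∑ π : Equiv.Perm (Fin N), G (π a) (π b) (π c) (π d)
      = Nat.factorial (N - 4) * ∑ y ∈ (univ : Finset ((Fin N × Fin N) × (Fin N × Fin N))).filter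
          (fun y => y.1.1 ≠ y.1.2 ∧ y.1.1 ≠ y.2.1 ∧ y.1.1 ≠ y.2.2 ∧ y.1.2 ≠ y.2.1
            ∧ y.1.2 ≠ y.2.2 ∧ y.2.1 ≠ y.2.2),
          G y.1.1 y.1.2 y.2.1 y.2.2 := by
  classical
  rw [← Finset.sum_fiberwise_of_maps_to
      (g := fun π : Equiv.Perm (Fin N) => ((π a, π b), (π c, π d)))
      (t := (univ : Finset ((Fin N × Fin N) × (Fin N × Fin N))).filter
        (fun y => y.1.1 ≠ y.1.2 ∧ y.1.1 ≠ y.2.1 ∧ y.1.1 ≠ y.2.2 ∧ y.1.2 ≠ y.2.1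
          ∧ y.1.2 ≠ y.2.2 ∧ y.2.1 ≠ y.2.2))
      (fun π _ => by
        simp only [Finset.mem_filter, Finset.mem_univ, true_and]
        refine ⟨fun h => hab (π.injective h), fun h => hac (π.injective h),
          fun h => had (π.injective h), fun h => hbc (π.injective h),
          fun h => hbd (π.injective h), fun h => hcd (π.injective h)⟩)]
  rw [Finset.mul_sum]
  apply Finset.sum_congr rfl
  intro y hy
  obtain ⟨h1, h2, h3, h4, h5, h6⟩ := (Finset.mem_filter.mp hy).2
  have hconst : ∀ π ∈ univ.filter
      (fun π : Equiv.Perm (Fin N) => ((π a, π b), (π c, π d)) = y),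
      G (π a) (π b) (π c) (π d) = G y.1.1 y.1.2 y.2.1 y.2.2 := by
    intro π hπ
    have h := (Finset.mem_filter.mp hπ).2
    rw [← h]
  rw [Finset.sum_congr rfl hconst, Finset.sum_const, smul_eq_mul]
  have hsface : ({a, b, c, d} : Finset (Fin N)).card = 4 := by
    rw [Finset.card_insert_of_notMem (by simp [hab, hac, had]),
      Finset.card_insert_of_notMem (by simp [hbc, hbd]),
      Finset.card_insert_of_notMem (by simp [hcd]), Finset.card_singleton]
  have hga : (if a = a then y.1.1 else if a = b then y.1.2
      else if a = c then y.2.1 else y.2.2) = y.1.1 := by rw [if_pos rfl]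
  have hgb : (if b = a then y.1.1 else if b = b then y.1.2
      else if b = c then y.2.1 else y.2.2) = y.1.2 := by
    rw [if_neg (Ne.symm hab), if_pos rfl]
  have hgc : (if c = a then y.1.1 else if c = b then y.1.2
      else if c = c then y.2.1 else y.2.2) = y.2.1 := by
    rw [if_neg (Ne.symm hac), if_neg (Ne.symm hbc), if_pos rfl]
  have hgd : (if d = a then y.1.1 else if d = b then y.1.2
      else if d = c then y.2.1 else y.2.2) = y.2.2 := by
    rw [if_neg (Ne.symm had), if_neg (Ne.symm hbd), if_neg (Ne.symm hcd)]
  have hfe : (univ.filter (fun π : Equiv.Perm (Fin N) => ((π a, π b), (π c, π d)) = y)) =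
      (univ.filter fun π : Equiv.Perm (Fin N) =>
        ∀ x ∈ ({a, b, c, d} : Finset (Fin N)),
          π x = (if x = a then y.1.1 else if x = b then y.1.2
            else if x = c then y.2.1 else y.2.2)) := by
    apply Finset.filter_congr
    intro π _
    constructor
    · intro h x hx
      rw [Prod.ext_iff] at h
      obtain ⟨hl, hr⟩ := h
      rw [Prod.ext_iff] at hl hr
      simp only [Finset.mem_insert, Finset.mem_singleton] at hx
      rcases hx with rfl | rfl | rfl | rfl
      · rw [hga]; exact hl.1
      · rw [hgb]; exact hl.2
      · rw [hgc]; exact hr.1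
      · rw [hgd]; exact hr.2
    · intro h
      have ha' := h a (by simp)
      have hb' := h b (by simp)
      have hc' := h c (by simp)
      have hd' := h d (by simp)
      rw [hga] at ha'; rw [hgb] at hb'; rw [hgc] at hc'; rw [hgd] at hd'
      rw [Prod.ext_iff]; constructor <;> rw [Prod.ext_iff]
      · exact ⟨ha', hb'⟩
      · exact ⟨hc', hd'⟩
  have inj4 : ∀ (g : Fin N → Fin N), g a = y.1.1 → g b = y.1.2 → g c = y.2.1 → g d = y.2.2 →
      ∀ u, (u = a ∨ u = b ∨ u = c ∨ u = d) → ∀ w, (w = a ∨ w = b ∨ w = c ∨ w = d) →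
      g u = g w → u = w := by
    intro g ga gb gc gd u hu w hw h
    rcases hu with rfl | rfl | rfl | rfl <;> rcases hw with rfl | rfl | rfl | rfl <;>
      simp only [ga, gb, gc, gd] at h <;>
      first
        | rfl
        | exact absurd h (by assumption)
        | exact absurd h.symm (by assumption)
  rw [hfe, card_extending _ _ ?_, hsface, mul_comm]
  intro x hx x' hx' h
  simp only [Finset.coe_insert, Set.mem_insert_iff, Finset.coe_singleton,
    Set.mem_singleton_iff] at hx hx'
  exact inj4 (fun z => if z = a then y.1.1 else if z = b then y.1.2
    else if z = c then y.2.1 else y.2.2) hga hgb hgc hgd x hx x' hx' h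

/-- indicator of first block -/
def Bi (m n : ℕ) (p : Fin (2*m+2*n)) : ℕ := if p.val < 2*m then 1 else 0
/-- indicator of second block -/
def Bo (m n : ℕ) (p : Fin (2*m+2*n)) : ℕ := if p.val < 2*m then 0 else 1
/-- indicator that positions `p, q` lie in different blocks -/
def splitInd (m n : ℕ) (p q : Fin (2*m+2*n)) : ℕ :=
  Bi m n p * Bo m n q + Bo m n p * Bi m n q

/-- number of split pairs -/
def zed (m n : ℕ) (π : Equiv.Perm (Fin (2*m+2*n))) : ℕ :=
  ((univ : Finset (Fin (m+n))).filter
    (fun k => eps m n (π.symm (av m n k)) (π.symm (bv m n k)) ≠ 0)).card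

lemma ite_eps_eq_splitInd (p q : Fin (2*m+2*n)) :
    (if eps m n p q ≠ 0 then 1 else 0) = splitInd m n p q := by
  have hpow : (-1:ℚ)^(p.val+q.val) ≠ 0 := pow_ne_zero _ (by norm_num)
  unfold eps splitInd Bi Bo
  by_cases hp : p.val < 2*m <;> by_cases hq : q.val < 2*m <;>
    simp [hp, hq, hpow, neg_ne_zero]

lemma splitInd_self (p : Fin (2*m+2*n)) : splitInd m n p p = 0 := by
  unfold splitInd Bi Bo
  by_cases hp : p.val < 2*m <;> simp [hp]

lemma splitInd_mul_self (p q : Fin (2*m+2*n)) :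
    splitInd m n p q * splitInd m n p q = splitInd m n p q := by
  unfold splitInd Bi Bo
  by_cases hp : p.val < 2*m <;> by_cases hq : q.val < 2*m <;> simp [hp, hq]

lemma Bi_mul_Bo_self (p : Fin (2*m+2*n)) : Bi m n p * Bo m n p = 0 := by
  unfold Bi Bo
  by_cases hp : p.val < 2*m <;> simp [hp]

lemma splitInd_block (p q : Fin (2*m+2*n)) (h : splitInd m n p q ≠ 0) :
    Bi m n p + Bi m n q = 1 ∧ Bo m n p + Bo m n q = 1 := by
  unfold splitInd Bi Bo at *
  by_cases hp : p.val < 2*m <;> by_cases hq : q.val < 2*m <;> simp_all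

lemma card_val_lt {N c : ℕ} (hc : c ≤ N) :
    ((univ : Finset (Fin N)).filter (fun p => p.val < c)).card = c := by
  conv_rhs => rw [show c = (univ : Finset (Fin c)).card from by
    rw [Finset.card_univ, Fintype.card_fin]]
  apply Finset.card_bij (fun p hp => (⟨p.val, (Finset.mem_filter.mp hp).2⟩ : Fin c))
  · intro a _
    exact Finset.mem_univ _
  · intro a _ b _ h
    have hv : a.val = b.val := by simpa using h
    exact Fin.val_injective hv
  · intro q _
    exact ⟨⟨q.val, lt_of_lt_of_le q.isLt hc⟩,
      Finset.mem_filter.mpr ⟨Finset.mem_univ _, q.isLt⟩, rfl⟩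

lemma sum_Bi : ∑ p : Fin (2*m+2*n), Bi m n p = 2*m := by
  have h := card_val_lt (N := 2*m+2*n) (c := 2*m) (by omega)
  rw [Finset.card_filter] at h
  simpa [Bi] using h

lemma sum_Bo : ∑ p : Fin (2*m+2*n), Bo m n p = 2*n := by
  have h1 : ∑ p : Fin (2*m+2*n), (Bi m n p + Bo m n p) = 2*m+2*n := by
    have hone : ∀ p : Fin (2*m+2*n), Bi m n p + Bo m n p = 1 := by
      intro p; unfold Bi Bo; by_cases hp : p.val < 2*m <;> simp [hp]
    rw [Finset.sum_congr rfl (fun p _ => hone p), Finset.sum_const, Finset.card_univ,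
      Fintype.card_fin, smul_eq_mul, mul_one]
  rw [Finset.sum_add_distrib, sum_Bi] at h1
  omega

lemma prod_sum_split (f g : Fin (2*m+2*n) → ℕ) :
    ∑ y ∈ (univ : Finset (Fin (2*m+2*n) × Fin (2*m+2*n))),
      (f y.1 * g y.2 + g y.1 * f y.2)
    = (∑ p, f p) * (∑ p, g p) + (∑ p, g p) * (∑ p, f p) := by
  rw [Fintype.sum_prod_type]
  have h1 : ∀ p, ∑ q, (f p * g q + g p * f q) = f p * (∑ q, g q) + g p * (∑ q, f q) := by
    intro p
    rw [Finset.sum_add_distrib, ← Finset.mul_sum, ← Finset.mul_sum]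
  rw [Finset.sum_congr rfl (fun p _ => h1 p), Finset.sum_add_distrib, ← Finset.sum_mul,
    ← Finset.sum_mul]

lemma count2 : ∑ y ∈ (univ : Finset (Fin (2*m+2*n) × Fin (2*m+2*n))).filter
    (fun y => y.1 ≠ y.2), splitInd m n y.1 y.2 = 8*m*n := by
  rw [Finset.sum_subset (Finset.filter_subset _ _) (fun y _ hy => by
    have h : y.1 = y.2 :=
      not_not.mp (fun h => hy (Finset.mem_filter.mpr ⟨Finset.mem_univ _, h⟩))
    rw [show splitInd m n y.1 y.2 = splitInd m n y.1 y.1 from by rw [← h], splitInd_self])]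
  unfold splitInd
  rw [prod_sum_split, sum_Bi, sum_Bo]
  ring

lemma zed_eq_sum (π : Equiv.Perm (Fin (2*m+2*n))) :
    zed m n π = ∑ k : Fin (m+n), splitInd m n (π.symm (av m n k)) (π.symm (bv m n k)) := by
  unfold zed
  rw [Finset.card_filter]
  exact Finset.sum_congr rfl (fun k _ => ite_eps_eq_splitInd _ _)

lemma sum_symm_eq {N : ℕ} (g : Equiv.Perm (Fin N) → ℕ) :
    ∑ π : Equiv.Perm (Fin N), g π.symm = ∑ π : Equiv.Perm (Fin N), g π :=
  Fintype.sum_equiv ⟨fun π : Equiv.Perm (Fin N) => π.symm, fun π => π.symm,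
    fun π => by simp, fun π => by simp⟩ _ g (fun π => rfl)

lemma each_one (k : Fin (m+n)) :
    ∑ π : Equiv.Perm (Fin (2*m+2*n)), splitInd m n (π.symm (av m n k)) (π.symm (bv m n k))
      = 8*m*n * Nat.factorial (2*m+2*n-2) := by
  rw [sum_symm_eq (fun π => splitInd m n (π (av m n k)) (π (bv m n k)))]
  rw [sum_two_points (av m n k) (bv m n k) (av_ne_bv k) (splitInd m n), count2, mul_comm]

lemma moment1 :
    ∑ π : Equiv.Perm (Fin (2*m+2*n)), zed m n π
      = (m+n) * (8*m*n * Nat.factorial (2*m+2*n-2)) := by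
  rw [Finset.sum_congr rfl (fun π _ => zed_eq_sum π), Finset.sum_comm]
  rw [Finset.sum_congr rfl (fun k _ => each_one k), Finset.sum_const, Finset.card_univ,
    Fintype.card_fin, smul_eq_mul]

lemma val_distinct (k k' : Fin (m+n)) (h : k ≠ k') :
    av m n k ≠ bv m n k ∧ av m n k ≠ av m n k' ∧ av m n k ≠ bv m n k' ∧
    bv m n k ≠ av m n k' ∧ bv m n k ≠ bv m n k' ∧ av m n k' ≠ bv m n k' := by
  have hv : k.val ≠ k'.val := fun hh => h (Fin.val_injective hh)
  refine ⟨?_, ?_, ?_, ?_, ?_, ?_⟩ <;>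
    · intro hc
      have := congrArg Fin.val hc
      simp only [av_val, bv_val] at this
      omega

lemma sum_f1 (u w : Fin (2*m+2*n)) (huw : u ≠ w) (h1 : Bi m n u + Bi m n w = 1) :
    ∑ x : Fin (2*m+2*n), (if x ≠ u ∧ x ≠ w then Bi m n x else 0) = 2*m - 1 := by
  have e1 : (univ : Finset (Fin (2*m+2*n))).filter (fun x => x ≠ u ∧ x ≠ w)
      = univ \ {u, w} := by
    ext x
    simp only [Finset.mem_filter, Finset.mem_univ, true_and, Finset.mem_sdiff,
      Finset.mem_insert, Finset.mem_singleton]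
    tauto
  have e2 : ∑ x : Fin (2*m+2*n), (if x ≠ u ∧ x ≠ w then Bi m n x else 0)
      = ∑ x ∈ univ \ ({u,w} : Finset (Fin (2*m+2*n))), Bi m n x := by
    rw [← e1, Finset.sum_filter]
  rw [e2]
  have e3 := Finset.sum_sdiff (f := Bi m n)
    (show ({u,w} : Finset (Fin (2*m+2*n))) ⊆ univ from Finset.subset_univ _)
  have e4 : ∑ x ∈ ({u,w} : Finset (Fin (2*m+2*n))), Bi m n x = 1 := by
    rw [Finset.sum_pair huw]; exact h1
  have e5 := sum_Bi (m := m) (n := n)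
  omega

lemma sum_f2 (u w : Fin (2*m+2*n)) (huw : u ≠ w) (h2 : Bo m n u + Bo m n w = 1) :
    ∑ x : Fin (2*m+2*n), (if x ≠ u ∧ x ≠ w then Bo m n x else 0) = 2*n - 1 := by
  have e1 : (univ : Finset (Fin (2*m+2*n))).filter (fun x => x ≠ u ∧ x ≠ w)
      = univ \ {u, w} := by
    ext x
    simp only [Finset.mem_filter, Finset.mem_univ, true_and, Finset.mem_sdiff,
      Finset.mem_insert, Finset.mem_singleton]
    tauto
  have e2 : ∑ x : Fin (2*m+2*n), (if x ≠ u ∧ x ≠ w then Bo m n x else 0)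
      = ∑ x ∈ univ \ ({u,w} : Finset (Fin (2*m+2*n))), Bo m n x := by
    rw [← e1, Finset.sum_filter]
  rw [e2]
  have e3 := Finset.sum_sdiff (f := Bo m n)
    (show ({u,w} : Finset (Fin (2*m+2*n))) ⊆ univ from Finset.subset_univ _)
  have e4 : ∑ x ∈ ({u,w} : Finset (Fin (2*m+2*n))), Bo m n x = 1 := by
    rw [Finset.sum_pair huw]; exact h2
  have e5 := sum_Bo (m := m) (n := n)
  omega

lemma inner4 (u w : Fin (2*m+2*n)) (huw : u ≠ w) (hsp : splitInd m n u w ≠ 0) :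
    ∑ y2 : Fin (2*m+2*n) × Fin (2*m+2*n),
      (if y2.1 ≠ y2.2 ∧ y2.1 ≠ u ∧ y2.1 ≠ w ∧ y2.2 ≠ u ∧ y2.2 ≠ w
        then splitInd m n y2.1 y2.2 else 0)
      = (2*m-1) * (2*n-1) + (2*n-1) * (2*m-1) := by
  obtain ⟨h1, h2⟩ := splitInd_block u w hsp
  have hpt : ∀ y2 : Fin (2*m+2*n) × Fin (2*m+2*n),
      (if y2.1 ≠ y2.2 ∧ y2.1 ≠ u ∧ y2.1 ≠ w ∧ y2.2 ≠ u ∧ y2.2 ≠ w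
        then splitInd m n y2.1 y2.2 else 0)
      = (if y2.1 ≠ u ∧ y2.1 ≠ w then Bi m n y2.1 else 0)
          * (if y2.2 ≠ u ∧ y2.2 ≠ w then Bo m n y2.2 else 0)
        + (if y2.1 ≠ u ∧ y2.1 ≠ w then Bo m n y2.1 else 0)
          * (if y2.2 ≠ u ∧ y2.2 ≠ w then Bi m n y2.2 else 0) := by
    intro y2
    by_cases hA : y2.1 ≠ u ∧ y2.1 ≠ w
    · by_cases hB : y2.2 ≠ u ∧ y2.2 ≠ w
      · rw [if_pos hA, if_pos hA, if_pos hB, if_pos hB]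
        by_cases hE : y2.1 = y2.2
        · rw [if_neg (by tauto), hE]
          have z1 := Bi_mul_Bo_self (m := m) (n := n) y2.2
          have z2 : Bo m n y2.2 * Bi m n y2.2 = 0 := by rw [mul_comm]; exact z1
          omega
        · rw [if_pos ⟨hE, hA.1, hA.2, hB.1, hB.2⟩]
          rfl
      · rw [if_neg (by tauto), if_neg hB, if_neg hB, mul_zero, mul_zero, add_zero]
    · rw [if_neg (by tauto), if_neg hA, if_neg hA, zero_mul, zero_mul, add_zero]
  rw [Finset.sum_congr rfl (fun y2 _ => hpt y2),
    prod_sum_split (fun x => if x ≠ u ∧ x ≠ w then Bi m n x else 0)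
      (fun x => if x ≠ u ∧ x ≠ w then Bo m n x else 0),
    sum_f1 u w huw h1, sum_f2 u w huw h2]

lemma count4 :
    ∑ y ∈ (univ : Finset ((Fin (2*m+2*n) × Fin (2*m+2*n)) × (Fin (2*m+2*n) × Fin (2*m+2*n)))).filter
      (fun y => y.1.1 ≠ y.1.2 ∧ y.1.1 ≠ y.2.1 ∧ y.1.1 ≠ y.2.2 ∧ y.1.2 ≠ y.2.1
        ∧ y.1.2 ≠ y.2.2 ∧ y.2.1 ≠ y.2.2),
      splitInd m n y.1.1 y.1.2 * splitInd m n y.2.1 y.2.2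
    = 8*m*n * ((2*m-1) * (2*n-1) + (2*n-1) * (2*m-1)) := by
  rw [Finset.sum_filter, Fintype.sum_prod_type]
  have hpt : ∀ y1 y2 : Fin (2*m+2*n) × Fin (2*m+2*n),
      (if (y1.1 ≠ y1.2 ∧ y1.1 ≠ y2.1 ∧ y1.1 ≠ y2.2 ∧ y1.2 ≠ y2.1 ∧ y1.2 ≠ y2.2 ∧ y2.1 ≠ y2.2)
        then splitInd m n y1.1 y1.2 * splitInd m n y2.1 y2.2 else 0)
      = (if y1.1 ≠ y1.2 then splitInd m n y1.1 y1.2 else 0)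
        * (if y2.1 ≠ y2.2 ∧ y2.1 ≠ y1.1 ∧ y2.1 ≠ y1.2 ∧ y2.2 ≠ y1.1 ∧ y2.2 ≠ y1.2
            then splitInd m n y2.1 y2.2 else 0) := by
    intro y1 y2
    by_cases hC : y1.1 ≠ y1.2
    · by_cases hD : y2.1 ≠ y2.2 ∧ y2.1 ≠ y1.1 ∧ y2.1 ≠ y1.2 ∧ y2.2 ≠ y1.1 ∧ y2.2 ≠ y1.2
      · rw [if_pos ⟨hC, Ne.symm hD.2.1, Ne.symm hD.2.2.2.1, Ne.symm hD.2.2.1,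
          Ne.symm hD.2.2.2.2, hD.1⟩, if_pos hC, if_pos hD]
      · rw [if_neg (fun hall => hD ⟨hall.2.2.2.2.2, Ne.symm hall.2.1, Ne.symm hall.2.2.2.1,
          Ne.symm hall.2.2.1, Ne.symm hall.2.2.2.2.1⟩), if_pos hC, if_neg hD, mul_zero]
    · rw [if_neg (fun hall => hC hall.1), if_neg hC, zero_mul]
  rw [Finset.sum_congr rfl (fun y1 _ => Finset.sum_congr rfl (fun y2 _ => hpt y1 y2))]
  have pull : ∀ y1 : Fin (2*m+2*n) × Fin (2*m+2*n),
      ∑ y2 : Fin (2*m+2*n) × Fin (2*m+2*n),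
        ((if y1.1 ≠ y1.2 then splitInd m n y1.1 y1.2 else 0)
          * (if y2.1 ≠ y2.2 ∧ y2.1 ≠ y1.1 ∧ y2.1 ≠ y1.2 ∧ y2.2 ≠ y1.1 ∧ y2.2 ≠ y1.2
              then splitInd m n y2.1 y2.2 else 0))
      = (if y1.1 ≠ y1.2 then splitInd m n y1.1 y1.2 else 0)
          * ((2*m-1) * (2*n-1) + (2*n-1) * (2*m-1)) := by
    intro y1
    rw [← Finset.mul_sum]
    by_cases hw : (if y1.1 ≠ y1.2 then splitInd m n y1.1 y1.2 else 0) = 0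
    · rw [hw, zero_mul, zero_mul]
    · congr 1
      have hne : y1.1 ≠ y1.2 := by
        by_contra h
        rw [if_neg (not_not_intro h)] at hw
        exact hw rfl
      rw [if_pos hne] at hw
      exact inner4 y1.1 y1.2 hne hw
  rw [Finset.sum_congr rfl (fun y1 _ => pull y1), ← Finset.sum_mul]
  congr 1
  rw [← Finset.sum_filter]
  exact count2

lemma moment2off (k k' : Fin (m+n)) (hkk : k ≠ k') :
    ∑ π : Equiv.Perm (Fin (2*m+2*n)),
      splitInd m n (π.symm (av m n k)) (π.symm (bv m n k))
        * splitInd m n (π.symm (av m n k')) (π.symm (bv m n k'))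
      = (8*m*n * ((2*m-1) * (2*n-1) + (2*n-1) * (2*m-1))) * Nat.factorial (2*m+2*n-4) := by
  obtain ⟨d1, d2, d3, d4, d5, d6⟩ := val_distinct k k' hkk
  rw [sum_symm_eq (fun π => splitInd m n (π (av m n k)) (π (bv m n k))
    * splitInd m n (π (av m n k')) (π (bv m n k')))]
  rw [sum_four_points _ _ _ _ d1 d2 d3 d4 d5 d6
    (fun p q p' q' => splitInd m n p q * splitInd m n p' q'), count4, mul_comm]

lemma moment2 :
    ∑ π : Equiv.Perm (Fin (2*m+2*n)), zed m n π * zed m n π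
      = (m+n) * (8*m*n * Nat.factorial (2*m+2*n-2))
        + ((m+n)*(m+n) - (m+n)) * ((8*m*n * ((2*m-1) * (2*n-1) + (2*n-1) * (2*m-1)))
            * Nat.factorial (2*m+2*n-4)) := by
  have expand : ∀ π : Equiv.Perm (Fin (2*m+2*n)), zed m n π * zed m n π
      = ∑ y ∈ (univ : Finset (Fin (m+n))) ×ˢ (univ : Finset (Fin (m+n))),
          splitInd m n (π.symm (av m n y.1)) (π.symm (bv m n y.1))
            * splitInd m n (π.symm (av m n y.2)) (π.symm (bv m n y.2)) := by
    intro π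
    rw [zed_eq_sum π, Finset.sum_mul_sum, ← Finset.sum_product']
  rw [Finset.sum_congr rfl (fun π _ => expand π), Finset.sum_comm]
  rw [← Finset.diag_union_offDiag (univ : Finset (Fin (m+n))),
    Finset.sum_union (Finset.disjoint_diag_offDiag _)]
  congr 1
  · rw [Finset.sum_diag]
    have hd : ∀ k : Fin (m+n),
        ∑ π : Equiv.Perm (Fin (2*m+2*n)),
          splitInd m n (π.symm (av m n k)) (π.symm (bv m n k))
            * splitInd m n (π.symm (av m n k)) (π.symm (bv m n k))
        = 8*m*n * Nat.factorial (2*m+2*n-2) := by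
      intro k
      rw [Finset.sum_congr rfl (fun π _ => splitInd_mul_self _ _)]
      exact each_one k
    rw [Finset.sum_congr rfl (fun k _ => hd k), Finset.sum_const, Finset.card_univ,
      Fintype.card_fin, smul_eq_mul]
  · have ho : ∀ y ∈ (univ : Finset (Fin (m+n))).offDiag,
        ∑ π : Equiv.Perm (Fin (2*m+2*n)),
          splitInd m n (π.symm (av m n y.1)) (π.symm (bv m n y.1))
            * splitInd m n (π.symm (av m n y.2)) (π.symm (bv m n y.2))
        = (8*m*n * ((2*m-1) * (2*n-1) + (2*n-1) * (2*m-1))) * Nat.factorial (2*m+2*n-4) := by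
      intro y hy
      exact moment2off y.1 y.2 (Finset.mem_offDiag.mp hy).2.2
    rw [Finset.sum_congr rfl ho, Finset.sum_const, Finset.offDiag_card,
      Finset.card_univ, Fintype.card_fin, smul_eq_mul]


lemma fact2 (x : ℕ) (hx : 2 ≤ x) :
    Nat.factorial x = x * ((x-1) * Nat.factorial (x-2)) := by
  obtain ⟨y, rfl⟩ : ∃ y, x = y + 2 := ⟨x - 2, by omega⟩
  rw [show y+2-1 = y+1 from by omega, show y+2-2 = y from by omega,
    Nat.factorial_succ, Nat.factorial_succ]

lemma fact_chain (x : ℕ) (hx : 4 ≤ x) :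
    Nat.factorial (x-2) = (x-2)*((x-3) * Nat.factorial (x-4))
    ∧ Nat.factorial x = x*((x-1)*((x-2)*((x-3) * Nat.factorial (x-4)))) := by
  obtain ⟨y, rfl⟩ : ∃ y, x = y + 4 := ⟨x - 4, by omega⟩
  constructor
  · rw [show y+4-2 = (y+1)+1 from by omega, show y+4-3 = y+1 from by omega,
      show y+4-4 = y from by omega, Nat.factorial_succ, Nat.factorial_succ]
  · rw [show y+4-1 = y+3 from by omega, show y+4-2 = y+2 from by omega,
      show y+4-3 = y+1 from by omega, show y+4-4 = y from by omega,
      show y+4 = (((y+1)+1)+1)+1 from by omega,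
      Nat.factorial_succ, Nat.factorial_succ, Nat.factorial_succ, Nat.factorial_succ]

lemma key_ineq (hm : 0 < m) (hn : 0 < n) :
    (((m+n)*(m+n) - (m+n)) * ((8*m*n * ((2*m-1) * (2*n-1) + (2*n-1) * (2*m-1)))
        * Nat.factorial (2*m+2*n-4))) * Nat.factorial (2*m+2*n)
    ≤ ((m+n) * (8*m*n * Nat.factorial (2*m+2*n-2)))
        * ((m+n) * (8*m*n * Nat.factorial (2*m+2*n-2))) := by
  obtain ⟨a, rfl⟩ : ∃ a, m = a + 1 := ⟨m - 1, by omega⟩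
  obtain ⟨b, rfl⟩ : ∃ b, n = b + 1 := ⟨n - 1, by omega⟩
  rw [(fact_chain (2*(a+1)+2*(b+1)) (by omega)).1, (fact_chain (2*(a+1)+2*(b+1)) (by omega)).2]
  rw [show 2*(a+1)+2*(b+1)-1 = 2*a+2*b+3 from by omega,
    show 2*(a+1)+2*(b+1)-2 = 2*a+2*b+2 from by omega,
    show 2*(a+1)+2*(b+1)-3 = 2*a+2*b+1 from by omega,
    show 2*(a+1)-1 = 2*a+1 from by omega,
    show 2*(b+1)-1 = 2*b+1 from by omega,
    show ((a+1)+(b+1))*((a+1)+(b+1)) - ((a+1)+(b+1)) = (a+b+2)*(a+b+1) from by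
      have h : ((a+1)+(b+1))*((a+1)+(b+1)) = (a+b+2)*(a+b+1) + (a+b+2) := by ring
      omega,
    show 2*(a+1)+2*(b+1) = 2*a+2*b+4 from by omega]
  rw [show 2*a+2*b+4-4 = 2*a+2*b from by omega]
  set X := Nat.factorial (2*a+2*b) with hX
  have core : (2*a+1)*((2*b+1)*(2*a+2*b+3)) ≤ 4*((a+1)*((b+1)*(2*a+2*b+1))) := by
    nlinarith [sq_nonneg a, sq_nonneg b, sq_nonneg (a+b)]
  calc ((a+b+2)*(a+b+1)) * ((8*(a+1)*(b+1) * ((2*a+1) * (2*b+1) + (2*b+1) * (2*a+1))) * X)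
        * ((2*a+2*b+4)*((2*a+2*b+3)*((2*a+2*b+2)*((2*a+2*b+1) * X))))
      = (16*(a+b+2)*((a+1)*(b+1))*(2*a+2*b+4)*(2*a+2*b+2)*(2*a+2*b+1)
          *(X*X)) * ((a+b+1)*((2*a+1)*((2*b+1)*(2*a+2*b+3)))) := by ring
    _ ≤ (16*(a+b+2)*((a+1)*(b+1))*(2*a+2*b+4)*(2*a+2*b+2)*(2*a+2*b+1)
          *(X*X)) * ((a+b+1)*(4*((a+1)*((b+1)*(2*a+2*b+1))))) := by
        apply Nat.mul_le_mul_left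
        exact Nat.mul_le_mul_left _ core
    _ ≤ (((a+1)+(b+1)) * (8*(a+1)*(b+1) * ((2*a+2*b+2)*((2*a+2*b+1) * X))))
        * (((a+1)+(b+1)) * (8*(a+1)*(b+1) * ((2*a+2*b+2)*((2*a+2*b+1) * X)))) := by
        apply Nat.le_of_eq
        ring

lemma varNat (hm : 0 < m) (hn : 0 < n) :
    (∑ π : Equiv.Perm (Fin (2*m+2*n)), zed m n π * zed m n π) * Nat.factorial (2*m+2*n)
      ≤ (∑ π : Equiv.Perm (Fin (2*m+2*n)), zed m n π) * Nat.factorial (2*m+2*n)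
        + (∑ π : Equiv.Perm (Fin (2*m+2*n)), zed m n π)
          * (∑ π : Equiv.Perm (Fin (2*m+2*n)), zed m n π) := by
  rw [moment1, moment2, add_mul]
  apply Nat.add_le_add_left
  exact key_ineq hm hn

lemma rate_ineq (hm : 0 < m) (hn : 0 < n) :
    (min m n) * Nat.factorial (2*m+2*n)
      ≤ (m+n) * (8*m*n * Nat.factorial (2*m+2*n-2)) := by
  have hf := fact2 (2*m+2*n) (by omega)
  rw [hf, show 2*m+2*n-1 = 2*(m+n)-1 from by omega]
  have hcore : (min m n) * (2*(m+n)-1) ≤ 4*m*n := by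
    rcases le_total m n with h | h
    · rw [min_eq_left h]
      calc m * (2*(m+n)-1) ≤ m * (4*n) := Nat.mul_le_mul_left _ (by omega)
        _ = 4*m*n := by ring
    · rw [min_eq_right h]
      calc n * (2*(m+n)-1) ≤ n * (4*m) := Nat.mul_le_mul_left _ (by omega)
        _ = 4*m*n := by ring
  calc (min m n) * ((2*m+2*n) * ((2*(m+n)-1) * Nat.factorial (2*m+2*n-2)))
      = ((min m n) * (2*(m+n)-1)) * ((2*m+2*n) * Nat.factorial (2*m+2*n-2)) := by ring
    _ ≤ (4*m*n) * ((2*m+2*n) * Nat.factorial (2*m+2*n-2)) :=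
        Nat.mul_le_mul_right _ hcore
    _ = (m+n) * (8*m*n * Nat.factorial (2*m+2*n-2)) := by ring

lemma eps_trichotomy (p q : Fin (2*m+2*n)) :
    eps m n p q = 0 ∨ eps m n p q = 1 ∨ eps m n p q = -1 := by
  unfold eps
  rcases Nat.even_or_odd (p.val + q.val) with he | ho
  · rw [he.neg_one_pow]
    split_ifs <;> norm_num
  · rw [ho.neg_one_pow]
    split_ifs <;> norm_num

lemma stepD (v : ℚ) (π : Equiv.Perm (Fin (2*m+2*n))) :
    ((univ : Finset (Finset (Fin (m+n)))).filter
        (fun S => petalLk m n (sigmaS m n S * π) = v)).card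
      ≤ 2^((m+n) - zed m n π) * Nat.choose (zed m n π) (zed m n π / 2) := by
  have hfc : ∀ S ∈ (univ : Finset (Finset (Fin (m+n)))),
      ((petalLk m n (sigmaS m n S * π) = v)
        ↔ (∑ k ∈ S, eps m n (π.symm (av m n k)) (π.symm (bv m n k))
            = v - petalLk m n π)) := by
    intro S _
    rw [stepB]
    constructor <;> intro h <;> linarith
  rw [Finset.filter_congr hfc]
  exact LO_count (m+n) (fun k => eps m n (π.symm (av m n k)) (π.symm (bv m n k)))
    (fun k => eps_trichotomy _ _) (v - petalLk m n π)

noncomputable def bReal (z : ℕ) : ℝ := if z = 0 then 1 else (Real.sqrt z)⁻¹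

lemma bReal_le_one (z : ℕ) : bReal z ≤ 1 := by
  unfold bReal
  split_ifs with h
  · exact le_refl 1
  · have h1 : (1:ℝ) ≤ Real.sqrt z := by
      have := Real.sqrt_le_sqrt (show (1:ℝ) ≤ (z:ℝ) by
        exact_mod_cast Nat.one_le_iff_ne_zero.mpr h)
      rwa [Real.sqrt_one] at this
    exact inv_le_one_of_one_le₀ h1

lemma count_le_bReal (z K : ℕ) (hzK : z ≤ K) :
    ((2^(K - z) * Nat.choose z (z/2) : ℕ) : ℝ) ≤ 2^K * bReal z := by
  rcases Nat.eq_zero_or_pos z with rfl | hz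
  · simp [bReal]
  · have hzne : z ≠ 0 := Nat.pos_iff_ne_zero.mp hz
    unfold bReal
    rw [if_neg hzne]
    have hsq : (0:ℝ) < Real.sqrt z := Real.sqrt_pos.mpr (by exact_mod_cast hz)
    push_cast
    rw [← div_eq_mul_inv, le_div_iff₀ hsq]
    calc (2:ℝ)^(K-z) * (Nat.choose z (z/2) : ℝ) * Real.sqrt z
        = (2:ℝ)^(K-z) * ((Nat.choose z (z/2) : ℝ) * Real.sqrt z) := by ring
      _ ≤ (2:ℝ)^(K-z) * 2^z :=
          mul_le_mul_of_nonneg_left (choose_half_le_real z) (by positivity)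
      _ = 2^K := by rw [← pow_add]; congr 1; omega

end PetalAux

open PetalAux in
/-- For the random `(2m,2n)`-petal link, the linking number attains any particular value `v`
with probability at most `6/√(min(m,n))`. -/
theorem linking_number_anticoncentration (m n : ℕ) (hm : 0 < m) (hn : 0 < n) (v : ℤ) :
    ((Finset.univ.filter fun π : Equiv.Perm (Fin (2 * m + 2 * n)) =>
        petalLk m n π = (v : ℚ)).card : ℝ) /
        Fintype.card (Equiv.Perm (Fin (2 * m + 2 * n))) ≤
      6 / Real.sqrt (min m n) := by
  classical
  have hNf : Fintype.card (Equiv.Perm (Fin (2*m+2*n))) = Nat.factorial (2*m+2*n) := by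
    rw [Fintype.card_perm, Fintype.card_fin]
  set Nf := Nat.factorial (2*m+2*n) with hNfdef
  set S1 := (m+n) * (8*m*n * Nat.factorial (2*m+2*n-2)) with hS1def
  set cnt := (Finset.univ.filter fun π : Equiv.Perm (Fin (2 * m + 2 * n)) =>
    petalLk m n π = (v : ℚ)).card with hcnt
  set r := min m n with hr
  have hr1 : 1 ≤ r := le_min hm hn
  have hNfpos : (0:ℝ) < (Nf:ℝ) := by exact_mod_cast (Nat.factorial_pos _)
  set μ : ℝ := (S1 : ℝ) / (Nf : ℝ) with hμ
  have hμr : (r:ℝ) ≤ μ := by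
    rw [hμ, le_div_iff₀ hNfpos]
    exact_mod_cast rate_ineq hm hn
  have hrpos : (0:ℝ) < (r:ℝ) := by exact_mod_cast hr1
  have hμpos : (0:ℝ) < μ := lt_of_lt_of_le hrpos hμr
  have hS1μ : (S1 : ℝ) = μ * Nf := by
    rw [hμ]
    field_simp
  -- Step 1 : cnt ≤ ∑ bReal (zed π)
  have step1 : (cnt : ℝ) ≤ ∑ π : Equiv.Perm (Fin (2*m+2*n)), bReal (zed m n π) := by
    have hC := stepC (m := m) (n := n) ((v : ℚ))
    rw [← hcnt] at hC
    have hle : ∀ π : Equiv.Perm (Fin (2*m+2*n)),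
        ((((Finset.univ : Finset (Finset (Fin (m+n)))).filter
          (fun S => petalLk m n (sigmaS m n S * π) = (v:ℚ))).card : ℝ))
        ≤ 2^(m+n) * bReal (zed m n π) := by
      intro π
      have h1 : ((((Finset.univ : Finset (Finset (Fin (m+n)))).filter
          (fun S => petalLk m n (sigmaS m n S * π) = (v:ℚ))).card : ℝ))
          ≤ ((2^((m+n) - zed m n π) * Nat.choose (zed m n π) (zed m n π / 2) : ℕ) : ℝ) := by
        exact_mod_cast stepD ((v:ℚ)) π
      refine h1.trans (count_le_bReal _ _ ?_)
      calc zed m n π ≤ (Finset.univ : Finset (Fin (m+n))).card := Finset.card_filter_le _ _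
        _ = m+n := by simp
    have h2 : (cnt : ℝ) * 2^(m+n)
        ≤ (∑ π : Equiv.Perm (Fin (2*m+2*n)), bReal (zed m n π)) * 2^(m+n) := by
      calc (cnt:ℝ) * 2^(m+n) = ((cnt * 2^(m+n) : ℕ) : ℝ) := by push_cast; ring
        _ = ((∑ π : Equiv.Perm (Fin (2*m+2*n)),
              ((Finset.univ : Finset (Finset (Fin (m+n)))).filter
                (fun S => petalLk m n (sigmaS m n S * π) = (v:ℚ))).card : ℕ) : ℝ) := by
            rw [hC]
        _ = ∑ π : Equiv.Perm (Fin (2*m+2*n)),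
              (((Finset.univ : Finset (Finset (Fin (m+n)))).filter
                (fun S => petalLk m n (sigmaS m n S * π) = (v:ℚ))).card : ℝ) := by
            push_cast
            rfl
        _ ≤ ∑ π : Equiv.Perm (Fin (2*m+2*n)), 2^(m+n) * bReal (zed m n π) :=
            Finset.sum_le_sum (fun π _ => hle π)
        _ = (∑ π : Equiv.Perm (Fin (2*m+2*n)), bReal (zed m n π)) * 2^(m+n) := by
            rw [Finset.sum_mul]
            exact Finset.sum_congr rfl (fun π _ => by ring)
    exact le_of_mul_le_mul_right h2 (by positivity)
  -- Step 2 : split the sum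
  set c2 : ℝ := Real.sqrt 2 / Real.sqrt μ with hc2
  have hc2nn : 0 ≤ c2 := by positivity
  have hptw : ∀ π : Equiv.Perm (Fin (2*m+2*n)),
      bReal (zed m n π) ≤ (if ((zed m n π : ℝ) ≤ μ/2) then (1:ℝ) else 0) + c2 := by
    intro π
    by_cases h : ((zed m n π : ℝ) ≤ μ/2)
    · rw [if_pos h]
      have := bReal_le_one (zed m n π)
      linarith
    · rw [if_neg h, zero_add]
      push_neg at h
      have hz0 : zed m n π ≠ 0 := by
        intro h0
        rw [h0] at h
        norm_num at h
        linarith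
      unfold bReal
      rw [if_neg hz0]
      have hs1 : Real.sqrt (μ/2) ≤ Real.sqrt (zed m n π) := Real.sqrt_le_sqrt h.le
      have hs2 : (0:ℝ) < Real.sqrt (μ/2) := Real.sqrt_pos.mpr (by positivity)
      refine (inv_anti₀ hs2 hs1).trans ?_
      rw [hc2]
      rw [show μ/2 = μ/(2:ℝ) from rfl, Real.sqrt_div hμpos.le, inv_div]
  have step2 : ∑ π : Equiv.Perm (Fin (2*m+2*n)), bReal (zed m n π)
      ≤ ((Finset.univ.filter
          (fun π : Equiv.Perm (Fin (2*m+2*n)) => ((zed m n π : ℝ) ≤ μ/2))).card : ℝ)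
        + Nf * c2 := by
    calc ∑ π : Equiv.Perm (Fin (2*m+2*n)), bReal (zed m n π)
        ≤ ∑ π : Equiv.Perm (Fin (2*m+2*n)),
            ((if ((zed m n π : ℝ) ≤ μ/2) then (1:ℝ) else 0) + c2) :=
          Finset.sum_le_sum (fun π _ => hptw π)
      _ = (∑ π : Equiv.Perm (Fin (2*m+2*n)), (if ((zed m n π : ℝ) ≤ μ/2) then (1:ℝ) else 0))
          + (∑ _π : Equiv.Perm (Fin (2*m+2*n)), c2) := Finset.sum_add_distrib
      _ = ((Finset.univ.filter
            (fun π : Equiv.Perm (Fin (2*m+2*n)) => ((zed m n π : ℝ) ≤ μ/2))).card : ℝ)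
          + Nf * c2 := by
          rw [Finset.sum_boole, Finset.sum_const, Finset.card_univ, hNf, nsmul_eq_mul]
  -- Step 3 : Chebyshev
  set Tcard := (Finset.univ.filter
    (fun π : Equiv.Perm (Fin (2*m+2*n)) => ((zed m n π : ℝ) ≤ μ/2))).card with hT
  have cheb : (Tcard : ℝ) * (μ/2)^2
      ≤ ∑ π : Equiv.Perm (Fin (2*m+2*n)), ((zed m n π : ℝ) - μ)^2 := by
    have h1 : ∀ π ∈ Finset.univ.filter
        (fun π : Equiv.Perm (Fin (2*m+2*n)) => ((zed m n π : ℝ) ≤ μ/2)),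
        (μ/2)^2 ≤ ((zed m n π : ℝ) - μ)^2 := by
      intro π hπ
      have hz := (Finset.mem_filter.mp hπ).2
      have h2 : μ/2 ≤ μ - (zed m n π : ℝ) := by linarith
      calc (μ/2)^2 ≤ (μ - (zed m n π:ℝ))^2 := pow_le_pow_left₀ (by positivity) h2 2
        _ = ((zed m n π : ℝ) - μ)^2 := by ring
    calc (Tcard : ℝ) * (μ/2)^2
        = ∑ _π ∈ Finset.univ.filter
            (fun π : Equiv.Perm (Fin (2*m+2*n)) => ((zed m n π : ℝ) ≤ μ/2)), (μ/2)^2 := by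
          rw [Finset.sum_const, nsmul_eq_mul, hT]
      _ ≤ ∑ π ∈ Finset.univ.filter
            (fun π : Equiv.Perm (Fin (2*m+2*n)) => ((zed m n π : ℝ) ≤ μ/2)),
            ((zed m n π : ℝ) - μ)^2 := Finset.sum_le_sum h1
      _ ≤ ∑ π : Equiv.Perm (Fin (2*m+2*n)), ((zed m n π : ℝ) - μ)^2 :=
          Finset.sum_le_sum_of_subset_of_nonneg (Finset.filter_subset _ _)
            (fun _ _ _ => sq_nonneg _)
  have hvar : ∑ π : Equiv.Perm (Fin (2*m+2*n)), ((zed m n π : ℝ) - μ)^2 ≤ (S1 : ℝ) := by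
    have hexp : ∀ π : Equiv.Perm (Fin (2*m+2*n)), ((zed m n π : ℝ) - μ)^2
        = (zed m n π : ℝ)*(zed m n π : ℝ) - 2*μ*(zed m n π : ℝ) + μ^2 := fun π => by ring
    rw [Finset.sum_congr rfl (fun π _ => hexp π), Finset.sum_add_distrib,
      Finset.sum_sub_distrib, ← Finset.mul_sum, Finset.sum_const, Finset.card_univ, hNf,
      nsmul_eq_mul]
    have hm1 : ∑ π : Equiv.Perm (Fin (2*m+2*n)), (zed m n π : ℝ) = (S1 : ℝ) := by
      rw [← Nat.cast_sum]
      exact_mod_cast congrArg (Nat.cast : ℕ → ℝ) (moment1 (m := m) (n := n))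
    have hm2 : ∑ π : Equiv.Perm (Fin (2*m+2*n)), (zed m n π : ℝ)*(zed m n π : ℝ)
        = ((∑ π : Equiv.Perm (Fin (2*m+2*n)), zed m n π * zed m n π : ℕ) : ℝ) := by
      push_cast
      rfl
    have hvn := varNat (m := m) (n := n) hm hn
    have hvnR : ((∑ π : Equiv.Perm (Fin (2*m+2*n)), zed m n π * zed m n π : ℕ) : ℝ) * Nf
        ≤ (S1:ℝ) * Nf + (S1:ℝ) * S1 := by
      have := hvn
      rw [moment1 (m := m) (n := n)] at this
      exact_mod_cast this
    rw [hm1, hm2]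
    have hkey : ((∑ π : Equiv.Perm (Fin (2*m+2*n)), zed m n π * zed m n π : ℕ) : ℝ)
        ≤ (S1:ℝ) + (S1:ℝ) * S1 / Nf := by
      rw [← sub_nonneg]
      have h0 : (S1:ℝ) + (S1:ℝ)*S1/Nf
          - ((∑ π : Equiv.Perm (Fin (2*m+2*n)), zed m n π * zed m n π : ℕ) : ℝ)
          = ((S1:ℝ) * Nf + (S1:ℝ) * S1
            - ((∑ π : Equiv.Perm (Fin (2*m+2*n)), zed m n π * zed m n π : ℕ) : ℝ) * Nf)
            / Nf := by
        field_simp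
      rw [h0]
      apply div_nonneg _ hNfpos.le
      linarith
    have e1 : 2*μ*(S1:ℝ) = 2*((S1:ℝ)*S1/Nf) := by
      rw [hμ]
      ring
    have e2 : (Nf:ℝ)*μ^2 = (S1:ℝ)*S1/Nf := by
      rw [hμ]
      field_simp
    linarith
  have hTbound : (Tcard : ℝ) ≤ 4 * Nf / μ := by
    have h1 : (Tcard:ℝ) * (μ/2)^2 ≤ μ * Nf := by
      calc (Tcard:ℝ) * (μ/2)^2 ≤ _ := cheb
        _ ≤ (S1:ℝ) := hvar
        _ = μ * Nf := hS1μ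
    have h2 : (0:ℝ) < (μ/2)^2 := by positivity
    rw [show (4:ℝ) * Nf / μ = (μ * Nf)/((μ/2)^2) from by field_simp; ring]
    rw [le_div_iff₀ h2]
    exact h1
  -- Final assembly
  have hfin1 : (cnt : ℝ) ≤ 4 * Nf / μ + Nf * c2 := by
    calc (cnt : ℝ) ≤ _ := step1
      _ ≤ (Tcard : ℝ) + Nf * c2 := step2
      _ ≤ 4 * Nf / μ + Nf * c2 := by linarith
  rw [hNf, div_le_div_iff₀ hNfpos (Real.sqrt_pos.mpr (by
    rw [← Nat.cast_min]
    exact_mod_cast hr1))]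
  rw [← Nat.cast_min, ← hr]
  have hsq2 : Real.sqrt 2 ≤ 2 := by
    have h4 : Real.sqrt 4 = 2 := by
      rw [show (4:ℝ) = 2^2 from by norm_num, Real.sqrt_sq (by norm_num)]
    calc Real.sqrt 2 ≤ Real.sqrt 4 := Real.sqrt_le_sqrt (by norm_num)
      _ = 2 := h4
  have hsr1 : (1:ℝ) ≤ Real.sqrt r := by
    have := Real.sqrt_le_sqrt (show (1:ℝ) ≤ (r:ℝ) from by exact_mod_cast hr1)
    rwa [Real.sqrt_one] at this
  have hsrpos : (0:ℝ) < Real.sqrt r := lt_of_lt_of_le one_pos hsr1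
  have hrr : (r:ℝ) = Real.sqrt r * Real.sqrt r := (Real.mul_self_sqrt hrpos.le).symm
  have hμsq : Real.sqrt r ≤ Real.sqrt μ := Real.sqrt_le_sqrt hμr
  have hμspos : (0:ℝ) < Real.sqrt μ := Real.sqrt_pos.mpr hμpos
  -- bound each term after multiplying out
  have hterm1 : 4 / μ ≤ 4 / (r:ℝ) := div_le_div_of_nonneg_left (by norm_num) hrpos hμr
  have hsr_le : Real.sqrt r ≤ (r:ℝ) := by
    have h := mul_le_mul_of_nonneg_left hsr1 hsrpos.le
    rw [mul_one] at h
    linarith [hrr]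
  have hterm1' : 4 / (r:ℝ) ≤ 4 / Real.sqrt r :=
    div_le_div_of_nonneg_left (by norm_num) hsrpos hsr_le
  have hterm2 : c2 ≤ Real.sqrt 2 / Real.sqrt r :=
    div_le_div_of_nonneg_left (Real.sqrt_nonneg 2) hsrpos hμsq
  have hnum : Real.sqrt 2 / Real.sqrt r ≤ 2 / Real.sqrt r := by gcongr
  have hmain : 4 / μ + c2 ≤ 6 / Real.sqrt r := by
    have h1 : 4 / μ ≤ 4 / Real.sqrt r := le_trans hterm1 hterm1'
    have h2 : c2 ≤ 2 / Real.sqrt r := le_trans hterm2 hnum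
    have h3 : 4 / Real.sqrt r + 2 / Real.sqrt r = 6 / Real.sqrt r := by
      rw [← add_div]
      norm_num
    linarith
  calc (cnt : ℝ) * Real.sqrt r ≤ (4 * Nf / μ + Nf * c2) * Real.sqrt r := by
        apply mul_le_mul_of_nonneg_right hfin1 hsrpos.le
    _ = ((4 / μ + c2) * Real.sqrt r) * Nf := by ring
    _ ≤ ((6 / Real.sqrt r) * Real.sqrt r) * Nf := by
        apply mul_le_mul_of_nonneg_right _ hNfpos.le
        apply mul_le_mul_of_nonneg_right hmain hsrpos.le
    _ = 6 * Nf := by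
        field_simp
end

section
/- Define lk: S_{2m+2n} → ℤ as half the signed crossing sum lk(π) = (1/2) Σ_{i=1}^{2m} Σ_{j=2m+1}^{2m+2n} (−1)^{i+j} sgn(π(i) − π(j)). The function lk is invariant under vertical rotation of heights: lk(ρ ∘ π) = lk(π), where ρ(x) = (x mod (2m+2n)) + 1. -/
open Finset

lemma sum_range_neg_one_pow_even (n : ℕ) :
    ∑ j ∈ Finset.range (2 * n), (-1 : ℚ) ^ j = 0 := by
  induction n with
  | zero => simp
  | succ k ih =>
    have h : 2 * (k + 1) = 2 * k + 1 + 1 := by ring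
    rw [h, Finset.sum_range_succ, Finset.sum_range_succ, ih, pow_succ]
    ring

lemma sum_fin_neg_one_pow_even (n : ℕ) :
    ∑ j : Fin (2 * n), (-1 : ℚ) ^ (j : ℕ) = 0 := by
  rw [Fin.sum_univ_eq_sum_range]
  exact sum_range_neg_one_pow_even n

lemma rot_val {N : ℕ} (hN : 0 < N) (y : Fin N) :
    (finRotate N y).val = (y.val + 1) % N := by
  obtain ⟨k, rfl⟩ := Nat.exists_eq_succ_of_ne_zero hN.ne'
  rw [finRotate_succ_apply, Fin.add_def]
  simp [Nat.add_mod_mod]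

lemma rot_sign {N a b : ℕ} (ha : a < N) (hb : b < N) (hab : a ≠ b) :
    (if ((b + 1) % N) < ((a + 1) % N) then (1 : ℚ) else -1)
      = (if b < a then (1 : ℚ) else -1)
        + (if a = N - 1 then (-2 : ℚ) else 0)
        + (if b = N - 1 then (2 : ℚ) else 0) := by
  have hA : (a + 1) % N = if a = N - 1 then 0 else a + 1 := by
    split
    · have h : a + 1 = N := by omega
      simp [h]
    · exact Nat.mod_eq_of_lt (by omega)
  have hB : (b + 1) % N = if b = N - 1 then 0 else b + 1 := by
    split
    · have h : b + 1 = N := by omega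
      simp [h]
    · exact Nat.mod_eq_of_lt (by omega)
  rw [hA, hB]
  split_ifs <;> first | (exfalso; omega) | norm_num

/-- The combinatorial linking number is invariant under vertical rotation of the heights,
i.e. under composing `π` with the cyclic shift `ρ(x) = x + 1 (mod 2m + 2n)`. -/
theorem linking_number_rotation (m n : ℕ) (π : Equiv.Perm (Fin (2 * m + 2 * n))) :
    petalLk m n (finRotate (2 * m + 2 * n) * π) = petalLk m n π := by
  rcases Nat.eq_zero_or_pos m with hm | hm
  · subst hm
    simp [petalLk]
  have hN : 0 < 2 * m + 2 * n := by omega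
  unfold petalLk
  congr 1
  have key : ∀ (i : Fin (2 * m)) (j : Fin (2 * n)),
      (-1 : ℚ) ^ (i.val + j.val) *
        (if ((finRotate (2 * m + 2 * n) * π) (Fin.natAdd (2 * m) j)).val
            < ((finRotate (2 * m + 2 * n) * π) (Fin.castAdd (2 * n) i)).val then 1 else -1)
      = (-1 : ℚ) ^ (i.val + j.val) *
          (if (π (Fin.natAdd (2 * m) j)).val < (π (Fin.castAdd (2 * n) i)).val then 1 else -1)
        + ((-1 : ℚ) ^ (i.val) *
            (if (π (Fin.castAdd (2 * n) i)).val = 2 * m + 2 * n - 1 then (-2 : ℚ) else 0))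
            * (-1 : ℚ) ^ (j.val)
        + (-1 : ℚ) ^ (i.val) *
            ((-1 : ℚ) ^ (j.val) *
              (if (π (Fin.natAdd (2 * m) j)).val = 2 * m + 2 * n - 1 then (2 : ℚ) else 0)) := by
    intro i j
    set a := π (Fin.castAdd (2 * n) i) with ha
    set b := π (Fin.natAdd (2 * m) j) with hb
    have hab : a.val ≠ b.val := by
      intro h
      have : Fin.castAdd (2 * n) i = Fin.natAdd (2 * m) j :=
        π.injective (Fin.ext h)
      have := congrArg Fin.val this
      simp [Fin.castAdd, Fin.natAdd] at this
      omega
    have h1 : ((finRotate (2 * m + 2 * n) * π) (Fin.castAdd (2 * n) i)).val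
        = (a.val + 1) % (2 * m + 2 * n) := by
      simp only [Equiv.Perm.mul_apply, ← ha]
      exact rot_val hN a
    have h2 : ((finRotate (2 * m + 2 * n) * π) (Fin.natAdd (2 * m) j)).val
        = (b.val + 1) % (2 * m + 2 * n) := by
      simp only [Equiv.Perm.mul_apply, ← hb]
      exact rot_val hN b
    rw [h1, h2, rot_sign a.isLt b.isLt hab, pow_add]
    ring
  rw [Finset.sum_congr rfl fun i _ => Finset.sum_congr rfl fun j _ => key i j]
  simp only [Finset.sum_add_distrib]
  have hzero1 : ∀ i : Fin (2 * m),
      ∑ j : Fin (2 * n),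
        ((-1 : ℚ) ^ (i.val) *
          (if (π (Fin.castAdd (2 * n) i)).val = 2 * m + 2 * n - 1 then (-2 : ℚ) else 0))
          * (-1 : ℚ) ^ (j.val) = 0 := by
    intro i
    rw [← Finset.mul_sum, sum_fin_neg_one_pow_even, mul_zero]
  have hzero2 :
      ∑ i : Fin (2 * m), ∑ j : Fin (2 * n),
        (-1 : ℚ) ^ (i.val) *
          ((-1 : ℚ) ^ (j.val) *
            (if (π (Fin.natAdd (2 * m) j)).val = 2 * m + 2 * n - 1 then (2 : ℚ) else 0)) = 0 := by
    rw [← Finset.sum_mul_sum, sum_fin_neg_one_pow_even, zero_mul]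
  simp only [hzero1, hzero2, Finset.sum_const_zero, add_zero]
end

section
/- Let X_1,...,X_k be independent uniform Bernoulli(1/2) random variables, let a_1,...,a_k be reals with |a_i| ≥ k^2 for all i, let c be a real constant, and let δ_{ij} be reals with |δ_{ij}| ≤ 1 for 1 ≤ i < j ≤ k. Define Y = c + Σ_i X_i a_i + Σ_{i<j} X_i X_j δ_{ij}. Then for every real v, P[Y = v] ≤ 1/sqrt(k). -/
open Finset

lemma centralBinom_sq_le (n : ℕ) : n.centralBinom ^ 2 * (2 * n + 1) ≤ 16 ^ n := by
  induction n with
  | zero => simp [Nat.centralBinom]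
  | succ n ih =>
    have key := Nat.succ_mul_centralBinom_succ n
    have hpos : 0 < (n + 1) ^ 2 := by positivity
    refine Nat.le_of_mul_le_mul_left ?_ hpos
    calc (n+1)^2 * (Nat.centralBinom (n+1) ^ 2 * (2 * (n+1) + 1))
        = ((n+1) * Nat.centralBinom (n+1))^2 * (2*n+3) := by ring
      _ = (2 * (2*n+1) * n.centralBinom)^2 * (2*n+3) := by rw [key]
      _ = (4 * (2*n+1) * (2*n+3)) * (n.centralBinom^2 * (2*n+1)) := by ring
      _ ≤ (16 * (n+1)^2) * 16^n := by
          refine Nat.mul_le_mul ?_ ih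
          nlinarith
      _ = (n+1)^2 * 16^(n+1) := by ring

lemma choose_half_sq_le (k : ℕ) : k.choose (k / 2) ^ 2 * k ≤ 4 ^ k := by
  rcases Nat.even_or_odd k with ⟨n, hn⟩ | ⟨n, hn⟩
  · subst hn
    have h2 : (n + n) / 2 = n := by omega
    have : (n + n).choose n = n.centralBinom := by rw [Nat.centralBinom]; ring_nf
    rw [h2, this]
    calc n.centralBinom ^ 2 * (n + n) ≤ n.centralBinom ^ 2 * (2 * n + 1) :=
          Nat.mul_le_mul_left _ (by omega)
      _ ≤ 16 ^ n := centralBinom_sq_le n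
      _ ≤ 4 ^ (n + n) := by rw [show (16:ℕ) = 4^2 by norm_num, ← pow_mul]; exact Nat.pow_le_pow_right (by norm_num) (by omega)
  · subst hn
    have h2 : (2 * n + 1) / 2 = n := by omega
    rw [h2]
    rcases n with _ | m
    · norm_num
    · have hle : (2 * (m+1) + 1).choose (m+1) ≤ 2 * (m+1).centralBinom := by
        have : 2 * (m+1) + 1 = (2 * (m+1)) + 1 := rfl
        rw [this, Nat.choose_succ_succ]
        simp only [Nat.succ_eq_add_one]
        have h1 : (2*(m+1)).choose m ≤ (m+1).centralBinom := Nat.choose_le_centralBinom m (m+1)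
        have h2 : (2*(m+1)).choose (m+1) ≤ (m+1).centralBinom := Nat.choose_le_centralBinom (m+1) (m+1)
        omega
      calc (2*(m+1)+1).choose (m+1) ^ 2 * (2*(m+1)+1)
          ≤ (2 * (m+1).centralBinom)^2 * (2*(m+1)+1) := by gcongr
        _ = 4 * ((m+1).centralBinom^2 * (2*(m+1)+1)) := by ring
        _ ≤ 4 * 16^(m+1) := Nat.mul_le_mul_left _ (centralBinom_sq_le (m+1))
        _ ≤ 4 ^ (2*(m+1)+1) := by
            rw [show (16:ℕ) = 4^2 by norm_num, ← pow_mul, ← pow_succ']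

lemma choose_sqrt_le (k : ℕ) : (k.choose (k/2) : ℝ) * Real.sqrt k ≤ 2 ^ k := by
  have h := choose_half_sq_le k
  have h' : ((k.choose (k/2) : ℝ))^2 * k ≤ (2:ℝ)^k * (2:ℝ)^k := by
    calc ((k.choose (k/2) : ℝ))^2 * k = ((k.choose (k/2)^2 * k : ℕ) : ℝ) := by push_cast; ring
      _ ≤ ((4^k : ℕ) : ℝ) := by exact_mod_cast h
      _ = (2:ℝ)^k * (2:ℝ)^k := by push_cast; rw [← pow_add, show (4:ℝ) = 2^2 by norm_num, ← pow_mul]; ring_nf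
  calc (k.choose (k/2) : ℝ) * Real.sqrt k = Real.sqrt (((k.choose (k/2) : ℝ))^2 * k) := by
        rw [Real.sqrt_mul (by positivity), Real.sqrt_sq (by positivity)]
    _ ≤ Real.sqrt ((2:ℝ)^k * (2:ℝ)^k) := Real.sqrt_le_sqrt h'
    _ = 2^k := by rw [Real.sqrt_mul_self (by positivity)]

open Finset


/-- Anti-concentration with pairwise error terms: for independent uniform Bernoulli
variables `Xᵢ` (encoded by a uniformly random subset `S ⊆ {1,…,k}`), coefficients
`|aᵢ| ≥ k²`, a constant `c`, and errors `|δᵢⱼ| ≤ 1`, the random variable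
`Y = c + Σᵢ Xᵢ aᵢ + Σ_{i<j} Xᵢ Xⱼ δᵢⱼ` satisfies `P[Y = v] ≤ 1/√k` for every `v`. -/
theorem bernoulli_quadratic_anticoncentration (k : ℕ) (hk : 0 < k) (a : Fin k → ℝ)
    (ha : ∀ i, (k : ℝ) ^ 2 ≤ |a i|) (c : ℝ) (δ : Fin k → Fin k → ℝ)
    (hδ : ∀ i j, i < j → |δ i j| ≤ 1) (v : ℝ) :
    (((Finset.univ : Finset (Finset (Fin k))).filter fun S =>
        c + (∑ i ∈ S, a i) +
          (∑ i : Fin k, ∑ j : Fin k,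
            if i < j ∧ i ∈ S ∧ j ∈ S then δ i j else 0) = v).card : ℝ) / 2 ^ k ≤
      1 / Real.sqrt k := by
  classical
  set Q : Finset (Fin k) → ℝ := fun S =>
    ∑ i : Fin k, ∑ j : Fin k, if i < j ∧ i ∈ S ∧ j ∈ S then δ i j else 0 with hQdef
  set f : Finset (Fin k) → ℝ := fun S => c + (∑ i ∈ S, a i) + Q S with hfdef
  have hk1 : (1:ℝ) ≤ (k:ℝ) := by exact_mod_cast hk
  have hgoal : (((Finset.univ : Finset (Finset (Fin k))).filter fun S =>
      c + (∑ i ∈ S, a i) +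
        (∑ i : Fin k, ∑ j : Fin k,
          if i < j ∧ i ∈ S ∧ j ∈ S then δ i j else 0) = v)) =
      (Finset.univ.filter fun S => f S = v) := rfl
  rw [hgoal]
  -- bound on the quadratic part
  have hQb : ∀ S : Finset (Fin k), |Q S| ≤ ((k:ℝ)^2 - k)/2 := by
    intro S
    set t : Fin k → Fin k → ℝ :=
      fun i j => |if i < j ∧ i ∈ S ∧ j ∈ S then δ i j else 0| with htdef
    have habs : |Q S| ≤ ∑ i : Fin k, ∑ j : Fin k, t i j := by
      refine (Finset.abs_sum_le_sum_abs _ _).trans ?_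
      exact Finset.sum_le_sum fun i _ => Finset.abs_sum_le_sum_abs _ _
    have hpair : ∀ i j : Fin k, t i j + t j i ≤ if i ≠ j then (1:ℝ) else 0 := by
      intro i j
      have hb : ∀ p q : Fin k, p < q → t p q ≤ 1 := by
        intro p q hpq
        simp only [htdef]
        split_ifs with h
        · exact hδ p q hpq
        · norm_num
      have hz : ∀ p q : Fin k, ¬ p < q → t p q = 0 := by
        intro p q hpq
        simp only [htdef]
        rw [if_neg (fun hc => hpq hc.1), abs_zero]
      rcases lt_trichotomy i j with h | h | h
      · rw [if_pos h.ne, hz j i (asymm h)]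
        linarith [hb i j h]
      · subst h
        rw [if_neg (by simp), hz i i (lt_irrefl i)]
        norm_num
      · rw [if_pos (ne_of_gt h), hz i j (asymm h)]
        linarith [hb j i h]
    have hcount : ∑ i : Fin k, ∑ j : Fin k, (if i ≠ j then (1:ℝ) else 0)
        = (k:ℝ)^2 - k := by
      have hrow : ∀ i : Fin k, (∑ j : Fin k, (if i ≠ j then (1:ℝ) else 0)) = (k:ℝ) - 1 := by
        intro i
        have e : ∀ j : Fin k, (if i ≠ j then (1:ℝ) else 0) = 1 - (if i = j then (1:ℝ) else 0) :=
          fun j => by by_cases h : i = j <;> simp [h]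
        rw [Finset.sum_congr rfl fun j _ => e j, Finset.sum_sub_distrib,
          Finset.sum_ite_eq Finset.univ i (fun _ => (1:ℝ))]
        simp [Finset.card_univ]
      rw [Finset.sum_congr rfl fun i _ => hrow i]
      simp [Finset.card_univ]
      ring
    have hdouble : (∑ i : Fin k, ∑ j : Fin k, t i j) + (∑ i : Fin k, ∑ j : Fin k, t i j)
        ≤ (k:ℝ)^2 - k := by
      have hcomm : (∑ i : Fin k, ∑ j : Fin k, t j i) = ∑ i : Fin k, ∑ j : Fin k, t i j :=
        Finset.sum_comm
      calc (∑ i : Fin k, ∑ j : Fin k, t i j) + (∑ i : Fin k, ∑ j : Fin k, t i j)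
          = (∑ i : Fin k, ∑ j : Fin k, t i j) + (∑ i : Fin k, ∑ j : Fin k, t j i) := by
            rw [hcomm]
        _ = ∑ i : Fin k, ((∑ j : Fin k, t i j) + (∑ j : Fin k, t j i)) :=
            Finset.sum_add_distrib.symm
        _ = ∑ i : Fin k, ∑ j : Fin k, (t i j + t j i) :=
            Finset.sum_congr rfl fun i _ => Finset.sum_add_distrib.symm
        _ ≤ ∑ i : Fin k, ∑ j : Fin k, (if i ≠ j then (1:ℝ) else 0) :=
            Finset.sum_le_sum fun i _ => Finset.sum_le_sum fun j _ => hpair i j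
        _ = (k:ℝ)^2 - k := hcount
    linarith
  -- flip negative coordinates
  set N : Finset (Fin k) := Finset.univ.filter fun i => a i < 0 with hNdef
  have hcard : (Finset.univ.filter fun S => f S = v).card
      = (Finset.univ.filter fun T => f (symmDiff T N) = v).card := by
    refine Finset.card_nbij' (fun S => symmDiff S N) (fun T => symmDiff T N) ?_ ?_ ?_ ?_
    · intro S hS
      simp only [Finset.mem_coe, Finset.mem_filter, Finset.mem_univ, true_and] at hS ⊢
      rwa [symmDiff_symmDiff_cancel_right]
    · intro T hT
      simp only [Finset.mem_coe, Finset.mem_filter, Finset.mem_univ, true_and] at hT ⊢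
      exact hT
    · intro S _; exact symmDiff_symmDiff_cancel_right N S
    · intro T _; exact symmDiff_symmDiff_cancel_right N T
  -- the flipped fiber is an antichain
  have hanti : IsAntichain (· ⊆ ·)
      ((Finset.univ.filter fun T => f (symmDiff T N) = v : Finset (Finset (Fin k))) :
        Set (Finset (Fin k))) := by
    intro T hT T' hT' hne hss
    simp only [Finset.coe_filter, Set.mem_setOf_eq, Finset.mem_univ, true_and] at hT hT'
    obtain ⟨i0, hi0⟩ : (T' \ T).Nonempty := by
      rw [Finset.sdiff_nonempty]
      intro hsub
      exact hne (Finset.Subset.antisymm hss hsub)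
    have hlin : (∑ i ∈ symmDiff T' N, a i) - (∑ i ∈ symmDiff T N, a i) = ∑ i ∈ T' \ T, |a i| := by
      have e1 : (∑ i ∈ symmDiff T' N, a i) = ∑ i : Fin k, if i ∈ symmDiff T' N then a i else 0 := by
        rw [Finset.sum_ite_mem, Finset.univ_inter]
      have e2 : (∑ i ∈ symmDiff T N, a i) = ∑ i : Fin k, if i ∈ symmDiff T N then a i else 0 := by
        rw [Finset.sum_ite_mem, Finset.univ_inter]
      rw [e1, e2, ← Finset.sum_sub_distrib]
      refine ((Finset.sum_subset (Finset.subset_univ (T' \ T)) ?_).symm).trans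
        (Finset.sum_congr rfl ?_)
      · intro x _ hx
        have hTT : x ∈ T ↔ x ∈ T' := by
          constructor
          · exact fun h => hss h
          · intro h
            by_contra hxT
            exact hx (Finset.mem_sdiff.2 ⟨h, hxT⟩)
        have hiff : (x ∈ symmDiff T' N) ↔ (x ∈ symmDiff T N) := by
          simp [Finset.mem_symmDiff, hTT]
        by_cases h2 : x ∈ symmDiff T N
        · rw [if_pos (hiff.2 h2), if_pos h2, sub_self]
        · rw [if_neg (fun hc => h2 (hiff.1 hc)), if_neg h2, sub_self]
      · intro x hx
        have hxT' : x ∈ T' := (Finset.mem_sdiff.1 hx).1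
        have hxT : x ∉ T := (Finset.mem_sdiff.1 hx).2
        by_cases hxN : x ∈ N
        · have h1 : x ∉ symmDiff T' N := by simp [Finset.mem_symmDiff, hxT', hxN]
          have h2 : x ∈ symmDiff T N := by simp [Finset.mem_symmDiff, hxT, hxN]
          have hax : a x < 0 := by
            simpa [hNdef] using hxN
          rw [if_neg h1, if_pos h2, abs_of_neg hax]
          ring
        · have h1 : x ∈ symmDiff T' N := by simp [Finset.mem_symmDiff, hxT', hxN]
          have h2 : x ∉ symmDiff T N := by simp [Finset.mem_symmDiff, hxT, hxN]
          have hax : 0 ≤ a x := by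
            have : ¬ a x < 0 := by simpa [hNdef] using hxN
            linarith
          rw [if_pos h1, if_neg h2, abs_of_nonneg hax, sub_zero]
    have hlin_ge : (k:ℝ)^2 ≤ ∑ i ∈ T' \ T, |a i| :=
      le_trans (ha i0) (Finset.single_le_sum (fun i _ => abs_nonneg (a i)) hi0)
    have hb1 := abs_le.1 (hQb (symmDiff T N))
    have hb2 := abs_le.1 (hQb (symmDiff T' N))
    have heq : (∑ i ∈ symmDiff T' N, a i) - (∑ i ∈ symmDiff T N, a i)
        + (Q (symmDiff T' N) - Q (symmDiff T N)) = 0 := by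
      have e1 : c + (∑ i ∈ symmDiff T N, a i) + Q (symmDiff T N) = v := hT
      have e2 : c + (∑ i ∈ symmDiff T' N, a i) + Q (symmDiff T' N) = v := hT'
      linarith
    rw [hlin] at heq
    linarith
  have hsp : (Finset.univ.filter fun T => f (symmDiff T N) = v).card ≤ k.choose (k/2) := by
    have h := IsAntichain.sperner hanti
    simpa [Fintype.card_fin] using h
  have hsqrt : 0 < Real.sqrt k := Real.sqrt_pos.2 (by positivity)
  rw [div_le_div_iff₀ (by positivity) hsqrt]
  calc ((Finset.univ.filter fun S => f S = v).card : ℝ) * Real.sqrt k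
      ≤ (k.choose (k/2) : ℝ) * Real.sqrt k := by
        have : ((Finset.univ.filter fun S => f S = v).card : ℝ) ≤ (k.choose (k/2) : ℝ) := by
          exact_mod_cast hcard ▸ hsp
        exact mul_le_mul_of_nonneg_right this hsqrt.le
    _ ≤ 2 ^ k := choose_sqrt_le k
    _ = 1 * 2 ^ k := by ring
end
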